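/- arXiv:1711.04547 — 5 statements merged into one kernel-verified Lean document; each statement's English description precedes it below -/
import Mathlib

section
/- Every 2×2 minor of the Lah matrix LM_m = [L(i,j)] (with 1 ≤ i,j ≤ m) is non-negative; that is, for all i < i' and j < j', L(i,j)·L(i',j') − L(i,j')·L(i',j) ≥ 0. -/
/-- The Lah number: `L(i,j) = C(i-1,j-1) · i!/j!` for `1 ≤ j ≤ i`, and `0` for `j > i`. -/
def lah (n k : ℕ) : ℕ :=
  if k = 0 then (if n = 0 then 1 else 0)
  else if k ≤ n then (n - 1).choose (k - 1) * (n.factorial / k.factorial)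
  else 0

lemma descFactorial_minor {a a' b b' : ℕ} (ha : a ≤ a') (hb : b ≤ b') :
    a.descFactorial b' * a'.descFactorial b ≤ a.descFactorial b * a'.descFactorial b' := by
  rw [← Nat.descFactorial_mul_descFactorial hb (n := a),
      ← Nat.descFactorial_mul_descFactorial hb (n := a')]
  have h := Nat.descFactorial_le (b' - b) (Nat.sub_le_sub_right ha b)
  calc (a - b).descFactorial (b' - b) * a.descFactorial b * a'.descFactorial b
      ≤ (a' - b).descFactorial (b' - b) * a.descFactorial b * a'.descFactorial b :=
        Nat.mul_le_mul_right _ (Nat.mul_le_mul_right _ h)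
    _ = a.descFactorial b * ((a' - b).descFactorial (b' - b) * a'.descFactorial b) := by ring

lemma choose_minor {a a' b b' : ℕ} (ha : a ≤ a') (hb : b ≤ b') :
    a.choose b' * a'.choose b ≤ a.choose b * a'.choose b' := by
  have h := descFactorial_minor ha hb
  rw [Nat.descFactorial_eq_factorial_mul_choose a b', Nat.descFactorial_eq_factorial_mul_choose a' b,
      Nat.descFactorial_eq_factorial_mul_choose a b, Nat.descFactorial_eq_factorial_mul_choose a' b'] at h
  have hpos : 0 < b.factorial * b'.factorial :=
    Nat.mul_pos b.factorial_pos b'.factorial_pos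
  refine Nat.le_of_mul_le_mul_left ?_ hpos
  calc b.factorial * b'.factorial * (a.choose b' * a'.choose b)
      = b'.factorial * a.choose b' * (b.factorial * a'.choose b) := by ring
    _ ≤ b.factorial * a.choose b * (b'.factorial * a'.choose b') := h
    _ = b.factorial * b'.factorial * (a.choose b * a'.choose b') := by ring

/-- Every 2×2 minor of the Lah matrix `LM_m = [L(i,j)]`, `1 ≤ i,j ≤ m`, is
non-negative: for `i < i'` and `j < j'`,
`L(i,j)·L(i',j') − L(i,j')·L(i',j) ≥ 0`. -/
theorem lah_two_by_two_minor_nonneg (m i i' j j' : ℕ)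
    (hi : 1 ≤ i) (hii' : i < i') (hi'm : i' ≤ m)
    (hj : 1 ≤ j) (hjj' : j < j') (hj'm : j' ≤ m) :
    0 ≤ (lah i j * lah i' j' : ℤ) - lah i j' * lah i' j := by
  have key : lah i j' * lah i' j ≤ lah i j * lah i' j' := by
    have hj0 : j ≠ 0 := by omega
    have hj'0 : j' ≠ 0 := by omega
    by_cases hji : j' ≤ i
    · -- all four entries in the triangular part
      have hji' : j ≤ i := by omega
      have h1 : j ≤ i' := by omega
      have h2 : j' ≤ i' := by omega
      simp only [lah, hj0, hj'0, hji, hji', h1, h2, if_true, if_false, if_neg hj0,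
        if_neg hj'0, if_pos]
      -- factorial quotient identity
      have hq : i.factorial / j'.factorial * (i'.factorial / j.factorial)
          = i.factorial / j.factorial * (i'.factorial / j'.factorial) := by
        rw [Nat.div_mul_div_comm (Nat.factorial_dvd_factorial hji)
              (Nat.factorial_dvd_factorial h1),
            Nat.div_mul_div_comm (Nat.factorial_dvd_factorial hji')
              (Nat.factorial_dvd_factorial h2),
            Nat.mul_comm j'.factorial]
      have hc := choose_minor (a := i - 1) (a' := i' - 1) (b := j - 1) (b' := j' - 1)
        (by omega) (by omega)
      calc (i - 1).choose (j' - 1) * (i.factorial / j'.factorial) *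
              ((i' - 1).choose (j - 1) * (i'.factorial / j.factorial))
          = (i - 1).choose (j' - 1) * (i' - 1).choose (j - 1) *
              (i.factorial / j'.factorial * (i'.factorial / j.factorial)) := by ring
        _ ≤ (i - 1).choose (j - 1) * (i' - 1).choose (j' - 1) *
              (i.factorial / j'.factorial * (i'.factorial / j.factorial)) :=
            Nat.mul_le_mul_right _ hc
        _ = (i - 1).choose (j - 1) * (i.factorial / j.factorial) *
              ((i' - 1).choose (j' - 1) * (i'.factorial / j'.factorial)) := by rw [hq]; ring
    · -- `lah i j' = 0`
      have : lah i j' = 0 := by simp [lah, hj'0, hji]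
      simp [this]
  have key' : (lah i j' * lah i' j : ℤ) ≤ lah i j * lah i' j' := by exact_mod_cast key
  linarith
end

section
/- Every minor of the Lah matrix LM_m is non-negative, i.e., for any subsets I, J of {1,...,m} of equal cardinality, the determinant of the submatrix of LM_m with rows I and columns J is non-negative. -/
/-- The `m × m` Lah matrix `LM_m` with `(i,j)`-entry `L(i,j)` (1-indexed). -/
def lahMatrix (m : ℕ) : Matrix (Fin m) (Fin m) ℝ :=
  fun i j => (lah (i + 1) (j + 1) : ℝ)

section Aux

open Matrix

/-- Minor matrix of an ℕ-indexed array. -/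
def toMat (A : ℕ → ℕ → ℝ) {r : ℕ} (f g : Fin r → ℕ) : Matrix (Fin r) (Fin r) ℝ :=
  Matrix.of fun i j => A (f i) (g j)

/-- Total nonnegativity for ℕ-indexed arrays. -/
def IsTN (A : ℕ → ℕ → ℝ) : Prop :=
  ∀ (r : ℕ) (f g : Fin r → ℕ), StrictMono f → StrictMono g → 0 ≤ (toMat A f g).det

lemma isTN_id : IsTN (fun x j => if x = j then 1 else 0) := by
  classical
  intro r f g hf hg
  by_cases h : ∀ j : Fin r, g j ∈ Set.range f
  · have hr : Set.range g ⊆ Set.range f := by rintro y ⟨j, rfl⟩; exact h j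
    have hre : Set.range f = Set.range g := by
      have h1 : (Finset.univ.image g) ⊆ (Finset.univ.image f) := by
        intro y hy
        simp only [Finset.mem_image, Finset.mem_univ, true_and] at hy ⊢
        obtain ⟨j, rfl⟩ := hy
        exact h j
      have h2 : (Finset.univ.image g) = (Finset.univ.image f) :=
        Finset.eq_of_subset_of_card_le h1 (by
          rw [Finset.card_image_of_injective _ hf.injective,
            Finset.card_image_of_injective _ hg.injective])
      have := congrArg (fun s : Finset ℕ => (s : Set ℕ)) h2
      simpa [Set.image_univ] using this.symm
    have hfg : f = g := by
      haveI : WellFoundedLT (Fin r) := inferInstance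
      exact (StrictMono.range_inj hf hg).mp hre
    subst hfg
    have : toMat (fun x j => if x = j then (1:ℝ) else 0) f f = 1 := by
      ext i j
      simp [toMat, Matrix.one_apply, hf.injective.eq_iff]
    rw [this, Matrix.det_one]
    exact zero_le_one
  · push_neg at h
    obtain ⟨j, hj⟩ := h
    have hz : ∀ i, toMat (fun x j => if x = j then (1:ℝ) else 0) f g i j = 0 := by
      intro i
      simp only [toMat, Matrix.of_apply, ite_eq_right_iff]
      intro hh
      exact absurd ⟨i, hh⟩ hj
    rw [Matrix.det_eq_zero_of_column_eq_zero j hz]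

/-- TNN is preserved by left multiplication by a nonnegative lower bidiagonal matrix. -/
lemma isTN_bimul (b c : ℕ → ℝ) (hb : ∀ x, 0 ≤ b x) (hc : ∀ x, 0 ≤ c x)
    (A : ℕ → ℕ → ℝ) (hA : IsTN A) :
    IsTN (fun x j => b x * A x j + c x * A (x - 1) j) := by
  classical
  intro r f g hf hg
  set v : ℕ → (Fin r → ℝ) := fun x => fun j => A x (g j) with hv
  set w : Fin r → Bool → (Fin r → ℝ) :=
    fun i t => (if t then b (f i) else c (f i)) • v (if t then f i else f i - 1) with hw
  have hM : toMat (fun x j => b x * A x j + c x * A (x - 1) j) f g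
      = Matrix.of (fun i => ∑ t : Bool, w i t) := by
    ext i j
    simp [toMat, hw, hv, Fintype.sum_bool, smul_eq_mul]
  rw [hM]
  have hdet : (Matrix.of (fun i => ∑ t : Bool, w i t)).det
      = Matrix.detRowAlternating (fun i : Fin r => ∑ t : Bool, w i t) := rfl
  have e1 : Matrix.detRowAlternating (fun i : Fin r => ∑ t : Bool, w i t)
      = ∑ p : Fin r → Bool, Matrix.detRowAlternating (fun i => w i (p i)) :=
    (Matrix.detRowAlternating (R := ℝ) (n := Fin r)).toMultilinearMap.map_sum w
  rw [hdet, e1]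
  refine Finset.sum_nonneg fun p _ => ?_
  have : Matrix.detRowAlternating (fun i => w i (p i))
      = (∏ i, (if p i then b (f i) else c (f i))) •
        Matrix.detRowAlternating (fun i => v (if p i then f i else f i - 1)) := by
    exact (Matrix.detRowAlternating (R := ℝ) (n := Fin r)).toMultilinearMap.map_smul_univ
        (fun i => if p i then b (f i) else c (f i))
        (fun i => v (if p i then f i else f i - 1))
  rw [this]
  set q : Fin r → ℕ := fun i => if p i then f i else f i - 1 with hq
  have hdet2 : Matrix.detRowAlternating (fun i => v (q i)) = (toMat A q g).det := rfl
  refine smul_nonneg (Finset.prod_nonneg fun i _ => by by_cases hpi : p i <;> simp [hpi, hb, hc]) ?_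
  rw [hdet2]
  by_cases hinj : Function.Injective q
  · have hmono : Monotone q := by
      intro i i' hii'
      rcases eq_or_lt_of_le hii' with rfl | hlt
      · exact le_rfl
      · have h1 : q i ≤ f i := by by_cases hpi : p i <;> simp [hq, hpi, Nat.sub_le]
        have h2 : f i' - 1 ≤ q i' := by by_cases hpi : p i' <;> simp [hq, hpi, Nat.sub_le]
        have : f i < f i' := hf hlt
        omega
    exact hA r q g (hmono.strictMono_of_injective hinj) hg
  · rw [Function.not_injective_iff] at hinj
    obtain ⟨i, i', hqe, hne⟩ := hinj
    have : (toMat A q g) i = (toMat A q g) i' := by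
      funext j; simp [toMat, hqe]
    rw [Matrix.det_zero_of_row_eq hne this]

lemma isTN_colscale (d : ℕ → ℝ) (hd : ∀ j, 0 ≤ d j) (A : ℕ → ℕ → ℝ) (hA : IsTN A) :
    IsTN (fun x j => A x j * d j) := by
  intro r f g hf hg
  have hM : toMat (fun x j => A x j * d j) f g
      = toMat A f g * Matrix.diagonal (fun j => d (g j)) := by
    ext i j
    simp [toMat, Matrix.mul_diagonal]
  rw [hM, Matrix.det_mul, Matrix.det_diagonal]
  exact mul_nonneg (hA r f g hf hg) (Finset.prod_nonneg fun j _ => hd _)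

/-- Partial product of the Pascal factorization. -/
def pasc (n : ℕ) : ℕ → ℕ → ℝ := fun x j =>
  if x ≤ n then (x.choose j : ℝ) else if j ≤ x then (n.choose (x - j) : ℝ) else 0

lemma pasc_zero : pasc 0 = fun x j => if x = j then 1 else 0 := by
  funext x j
  show (if x ≤ 0 then ((x.choose j : ℝ)) else if j ≤ x then ((Nat.choose 0 (x - j) : ℝ)) else 0)
      = if x = j then 1 else 0
  rcases Nat.eq_zero_or_pos x with rfl | hx
  · rw [if_pos (le_refl 0)]
    rcases Nat.eq_zero_or_pos j with rfl | hj
    · simp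
    · rw [Nat.choose_eq_zero_of_lt (by omega), if_neg (by omega)]
      simp
  · rw [if_neg (by omega)]
    rcases Nat.lt_trichotomy j x with hj | rfl | hj
    · rw [if_pos (by omega : j ≤ x), Nat.choose_eq_zero_of_lt (show 0 < x - j by omega),
        if_neg (by omega : ¬ x = j)]
      simp
    · rw [if_pos (le_refl j), Nat.sub_self]
      simp
    · rw [if_neg (by omega : ¬ j ≤ x), if_neg (by omega : ¬ x = j)]

lemma pasc_succ (n x j : ℕ) : pasc (n + 1) x j =
    1 * pasc n x j + (if n + 1 ≤ x then (1:ℝ) else 0) * pasc n (x - 1) j := by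
  simp only [pasc]
  rcases Nat.lt_trichotomy x (n + 1) with hx | rfl | hx
  · rw [if_pos (show x ≤ n + 1 by omega), if_pos (show x ≤ n by omega),
      if_neg (show ¬ n + 1 ≤ x by omega)]
    ring
  · rw [if_pos (le_refl (n + 1)), if_neg (show ¬ n + 1 ≤ n by omega),
      if_pos (le_refl (n + 1)), Nat.add_sub_cancel, if_pos (le_refl n)]
    rcases Nat.eq_zero_or_pos j with rfl | hj
    · rw [if_pos (Nat.zero_le _), Nat.sub_zero, Nat.choose_eq_zero_of_lt (show n < n + 1 by omega)]
      simp
    · obtain ⟨jj, rfl⟩ : ∃ jj, j = jj + 1 := ⟨j - 1, by omega⟩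
      by_cases hjn : jj ≤ n
      · rw [if_pos (show jj + 1 ≤ n + 1 by omega),
          (show n + 1 - (jj + 1) = n - jj by omega), Nat.choose_symm hjn,
          Nat.choose_succ_succ n jj]
        push_cast
        ring
      · rw [if_neg (show ¬ jj + 1 ≤ n + 1 by omega),
          Nat.choose_eq_zero_of_lt (show n + 1 < jj + 1 by omega),
          Nat.choose_eq_zero_of_lt (show n < jj + 1 by omega)]
        simp
  · rw [if_neg (show ¬ x ≤ n + 1 by omega), if_neg (show ¬ x ≤ n by omega),
      if_pos (show n + 1 ≤ x by omega), if_neg (show ¬ x - 1 ≤ n by omega)]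
    rcases Nat.lt_trichotomy j x with hj | rfl | hj
    · rw [if_pos (show j ≤ x by omega), if_pos (show j ≤ x by omega),
        if_pos (show j ≤ x - 1 by omega), (show x - j = (x - 1 - j) + 1 by omega),
        Nat.choose_succ_succ n (x - 1 - j)]
      push_cast
      ring
    · rw [if_pos (le_refl j), if_pos (le_refl j), if_neg (show ¬ j ≤ j - 1 by omega),
        Nat.sub_self]
      simp
    · rw [if_neg (show ¬ j ≤ x by omega), if_neg (show ¬ j ≤ x by omega),
        if_neg (show ¬ j ≤ x - 1 by omega)]
      simp

lemma isTN_pasc (n : ℕ) : IsTN (pasc n) := by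
  induction n with
  | zero => rw [pasc_zero]; exact isTN_id
  | succ n ih =>
    have : pasc (n + 1) = fun x j =>
        (fun _ : ℕ => (1:ℝ)) x * pasc n x j +
        (fun x : ℕ => if n + 1 ≤ x then (1:ℝ) else 0) x * pasc n (x - 1) j := by
      funext x j
      exact pasc_succ n x j
    rw [this]
    exact isTN_bimul _ _ (fun _ => zero_le_one)
      (fun x => by by_cases h : n + 1 ≤ x <;> simp [h]) _ ih

lemma isTN_choose : IsTN (fun x j => (x.choose j : ℝ)) := by
  intro r f g hf hg
  rcases Nat.eq_zero_or_pos r with rfl | hr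
  · rw [Matrix.det_isEmpty]
    exact zero_le_one
  · set n := f ⟨r - 1, by omega⟩ with hn
    have hM : toMat (fun x j => (x.choose j : ℝ)) f g = toMat (pasc n) f g := by
      ext i j
      have hle : f i ≤ n := by
        have hi : (i : ℕ) < r := i.isLt
        exact hf.monotone (by rw [Fin.le_def]; simpa using by omega)
      simp [toMat, pasc, hle]
    rw [hM]
    exact isTN_pasc n r f g hf hg

lemma isTN_lah : IsTN (fun x j =>
    (((fun y : ℕ => ((y + 1).factorial : ℝ)) x * (x.choose j : ℝ) +
      (fun _ : ℕ => (0:ℝ)) x * ((x - 1).choose j : ℝ)) * ((j + 1).factorial : ℝ)⁻¹)) := by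
  refine isTN_colscale _ (fun j => by positivity) _ ?_
  exact isTN_bimul _ _ (fun x => by positivity) (fun x => le_rfl) _ isTN_choose

lemma lah_entry (x y : ℕ) : (lah (x + 1) (y + 1) : ℝ) =
    (((x + 1).factorial : ℝ) * (x.choose y : ℝ) + 0 * ((x - 1).choose y : ℝ)) *
      ((y + 1).factorial : ℝ)⁻¹ := by
  rw [lah]
  rw [if_neg (by omega)]
  simp only [Nat.add_sub_cancel, zero_mul, add_zero]
  by_cases h : y + 1 ≤ x + 1
  · rw [if_pos h]
    have hdvd : (y + 1).factorial ∣ (x + 1).factorial := Nat.factorial_dvd_factorial h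
    have hne : ((y + 1).factorial : ℝ) ≠ 0 := by positivity
    rw [Nat.cast_mul, Nat.cast_div hdvd hne]
    field_simp
  · rw [if_neg h, Nat.choose_eq_zero_of_lt (by omega)]
    simp

end Aux

/-- The Lah matrix is totally non-negative: every minor, i.e. the determinant of
any square submatrix given by row indices `I` and column indices `J` of equal
cardinality (listed in increasing order), is non-negative. -/
theorem lahMatrix_totally_nonneg (m : ℕ) :
    ∀ (r : ℕ) (f g : Fin r → Fin m), StrictMono f → StrictMono g →
      0 ≤ ((lahMatrix m).submatrix f g).det := by
  intro r f g hf hg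
  have hf' : StrictMono (fun i => ((f i : ℕ))) := fun i j h => hf h
  have hg' : StrictMono (fun j => ((g j : ℕ))) := fun i j h => hg h
  have hM : (lahMatrix m).submatrix f g
      = toMat (fun x j =>
          (((fun y : ℕ => ((y + 1).factorial : ℝ)) x * (x.choose j : ℝ) +
            (fun _ : ℕ => (0:ℝ)) x * ((x - 1).choose j : ℝ)) * ((j + 1).factorial : ℝ)⁻¹))
          (fun i => (f i : ℕ)) (fun j => (g j : ℕ)) := by
    ext i j
    simp only [Matrix.submatrix_apply, toMat, Matrix.of_apply, lahMatrix]
    rw [lah_entry]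
  rw [hM]
  exact isTN_lah r _ _ hf' hg'
end

section
/- Lindström's lemma: In a planar acyclic weighted directed graph with sources a_1,...,a_n and sinks b_1,...,b_n (arranged compatibly with planarity), any minor Δ_{I,J}(W) of the weight matrix W equals the sum of weights of all collections of vertex-disjoint path systems connecting the sources indexed by I to the sinks indexed by J. -/
/-- `IsDirPath adj l u v`: the nonempty list of vertices `l` is a directed path
from `u` to `v` in the digraph with adjacency relation `adj`. -/
def IsDirPath {V : Type*} (adj : V → V → Prop) (l : List V) (u v : V) : Prop :=
  l ≠ [] ∧ l.head? = some u ∧ l.getLast? = some v ∧ l.Chain' adj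

/-- The weight of a path: the product of the weights of its edges. -/
def pathWeight {V R : Type*} [CommRing R] (w : V → V → R) (l : List V) : R :=
  ((l.zip l.tail).map fun e => w e.1 e.2).prod

namespace LGV

set_option linter.unusedSectionVars false

open List

variable {V : Type*} [DecidableEq V]



lemma mem_take_iff_indexOf {y : V} : ∀ (n : ℕ) (l : List V),
    (y ∈ l.take n ↔ y ∈ l ∧ l.idxOf y < n)
  | 0, l => by simp
  | (n+1), [] => by simp
  | (n+1), (a :: l) => by
    by_cases h : y = a
    · subst h; simp
    · simp only [take_succ_cons, mem_cons, h, false_or]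
      rw [mem_take_iff_indexOf n l, List.idxOf_cons_ne _ (fun hh => h hh.symm)]
      simp only [Nat.succ_eq_add_one]
      constructor
      · rintro ⟨h1, h2⟩; exact ⟨h1, by omega⟩
      · rintro ⟨h1, h2⟩; exact ⟨h1, by omega⟩

lemma indexOf_append_left {x : V} {l₁ : List V} (l₂ : List V) (h : x ∈ l₁) :
    (l₁ ++ l₂).idxOf x = l₁.idxOf x := by
  induction l₁ with
  | nil => simp at h
  | cons a t ih =>
    by_cases hxa : x = a
    · subst hxa; simp
    · have : x ∈ t := by simpa [hxa] using h
      rw [show (a :: t) ++ l₂ = a :: (t ++ l₂) from rfl]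
      rw [List.idxOf_cons_ne _ (fun hh => hxa hh.symm), List.idxOf_cons_ne _ (fun hh => hxa hh.symm)]
      rw [ih this]

/-- the part of `l` up to and including (the first occurrence of) `x` -/
def pre (l : List V) (x : V) : List V := l.take (l.idxOf x + 1)

/-- the part of `l` strictly after (the first occurrence of) `x` -/
def post (l : List V) (x : V) : List V := l.drop (l.idxOf x + 1)

lemma pre_append_post (l : List V) (x : V) : pre l x ++ post l x = l :=
  take_append_drop _ _

lemma length_pre {l : List V} {x : V} (hx : x ∈ l) :
    (pre l x).length = l.idxOf x + 1 := by
  have := List.idxOf_lt_length_iff.2 hx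
  simp [pre]; omega

lemma mem_pre_self {l : List V} {x : V} (hx : x ∈ l) : x ∈ pre l x := by
  rw [pre, mem_take_iff_indexOf]; exact ⟨hx, by omega⟩

lemma indexOf_pre {l : List V} {x : V} (hx : x ∈ l) :
    (pre l x).idxOf x = l.idxOf x := by
  conv_rhs => rw [← pre_append_post l x]
  rw [indexOf_append_left _ (mem_pre_self hx)]

lemma getLast?_pre {l : List V} {x : V} (hx : x ∈ l) :
    (pre l x).getLast? = some x := by
  have hlt := List.idxOf_lt_length_iff.2 hx
  have hlen := length_pre hx
  rw [List.getLast?_eq_getElem?, hlen]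
  simp only [Nat.add_sub_cancel]
  rw [pre, List.getElem?_take_of_lt (by omega)]
  rw [List.getElem?_eq_getElem hlt]
  have := List.idxOf_get (a := x) (l := l) hlt
  simp only [List.get_eq_getElem] at this
  rw [this]

lemma head?_pre {l : List V} {x : V} (hl : l ≠ []) : (pre l x).head? = l.head? := by
  cases l with
  | nil => simp at hl
  | cons a t => simp [pre]





/-- splice two paths at a common vertex -/
def splice (p q : List V) (x : V) : List V := pre p x ++ post q x

lemma indexOf_splice {p q : List V} {x : V} (hp : x ∈ p) :
    (splice p q x).idxOf x = p.idxOf x := by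
  rw [splice, indexOf_append_left _ (mem_pre_self hp), indexOf_pre hp]

lemma pre_splice {p q : List V} {x : V} (hp : x ∈ p) :
    pre (splice p q x) x = pre p x := by
  rw [pre, indexOf_splice hp, ← length_pre hp, splice, List.take_left]

lemma post_splice {p q : List V} {x : V} (hq : x ∈ q) :
    post (splice q p x) x = post p x := by
  rw [post, indexOf_splice hq, ← length_pre hq, splice, List.drop_left]

lemma splice_splice {p q : List V} {x : V} (hp : x ∈ p) (hq : x ∈ q) :
    splice (splice p q x) (splice q p x) x = p := by
  rw [splice, pre_splice hp, post_splice hq, pre_append_post]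

lemma mem_splice_self {p q : List V} {x : V} (hp : x ∈ p) : x ∈ splice p q x :=
  List.mem_append_left _ (mem_pre_self hp)

lemma mem_of_mem_splice {p q : List V} {x y : V} (h : y ∈ splice p q x) :
    y ∈ p ∨ y ∈ q := by
  rcases List.mem_append.1 h with h | h
  · exact Or.inl (List.mem_of_mem_take h)
  · exact Or.inr (List.mem_of_mem_drop h)

lemma exists_getLast?_eq {l : List V} (h : l ≠ []) : ∃ z, l.getLast? = some z := by
  cases hl : l.getLast? with
  | none => exact absurd (List.getLast?_eq_none_iff.1 hl) h
  | some z => exact ⟨z, rfl⟩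


lemma isDirPath_splice {adj : V → V → Prop} {p q : List V} {u v u' v' x : V}
    (hp : IsDirPath adj p u v) (hq : IsDirPath adj q u' v')
    (hxp : x ∈ p) (hxq : x ∈ q) : IsDirPath adj (splice p q x) u v' := by
  obtain ⟨hp0, hp1, hp2, hp3⟩ := hp
  obtain ⟨hq0, hq1, hq2, hq3⟩ := hq
  have hpre_ne : pre p x ≠ [] := List.ne_nil_of_mem (mem_pre_self hxp)
  have hqsplit := pre_append_post q x
  have hqchain := hq3
  rw [← hqsplit, List.Chain', List.isChain_append] at hqchain
  refine ⟨?_, ?_, ?_, ?_⟩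
  · exact List.append_ne_nil_of_left_ne_nil hpre_ne _
  · rw [splice, List.head?_append_of_ne_nil _ hpre_ne, head?_pre hp0, hp1]
  · rw [splice, List.getLast?_append]
    by_cases hpost : post q x = []
    · have : q.getLast? = some x := by
        rw [← hqsplit, hpost, List.append_nil, getLast?_pre hxq]
      rw [this] at hq2
      rw [hpost, getLast?_pre hxp]
      simpa using hq2
    · obtain ⟨z, hz⟩ := exists_getLast?_eq hpost
      have : q.getLast? = some z := by
        rw [← hqsplit, List.getLast?_append, hz]; rfl
      rw [this] at hq2
      rw [hz]; simpa using hq2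
  · rw [splice, List.Chain', List.isChain_append]
    refine ⟨hp3.prefix (List.take_prefix _ _), hqchain.2.1, ?_⟩
    intro c hc d hd
    rw [getLast?_pre hxp] at hc
    have hcx : c = x := by simpa using hc.symm
    subst hcx
    exact hqchain.2.2 c (by rw [getLast?_pre hxq]; rfl) d hd

variable {R : Type*} [CommRing R]


lemma pathWeight_cons_cons (w : V → V → R) (y z : V) (l : List V) :
    pathWeight w (y :: z :: l) = w y z * pathWeight w (z :: l) := by
  simp [pathWeight]

lemma pathWeight_append (w : V → V → R) {l₁ : List V} {x : V} (l₂ : List V)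
    (h : l₁.getLast? = some x) :
    pathWeight w (l₁ ++ l₂) = pathWeight w l₁ * pathWeight w (x :: l₂) := by
  induction l₁ with
  | nil => simp at h
  | cons a t ih =>
    cases t with
    | nil =>
      simp only [List.getLast?_singleton, Option.some.injEq] at h
      subst h
      simp [pathWeight]
    | cons b t' =>
      rw [List.getLast?_cons_cons] at h
      rw [List.cons_append, List.cons_append, pathWeight_cons_cons,
        ← List.cons_append, ih h, pathWeight_cons_cons]
      ring

lemma pathWeight_splice_mul (w : V → V → R) {p q : List V} {x : V}
    (hp : x ∈ p) (hq : x ∈ q) :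
    pathWeight w (splice p q x) * pathWeight w (splice q p x)
      = pathWeight w p * pathWeight w q := by
  have e1 := pathWeight_append w (post q x) (getLast?_pre hp)
  have e2 := pathWeight_append w (post p x) (getLast?_pre hq)
  have e3 := pathWeight_append w (post p x) (getLast?_pre hp)
  have e4 := pathWeight_append w (post q x) (getLast?_pre hq)
  rw [pre_append_post] at e3 e4
  rw [splice, splice, e1, e2, e3, e4]
  ring

/-- paths in an acyclic graph have no repeated vertices -/
lemma nodup_of_chain' {adj : V → V → Prop}
    (hacyc : ∀ l : List V, 2 ≤ l.length → l.Chain' adj → l.head? ≠ l.getLast?)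
    {l : List V} (hl : l.Chain' adj) : l.Nodup := by
  set Rel : V → V → Prop := fun u v =>
    ∃ m : List V, 2 ≤ m.length ∧ m.Chain' adj ∧ m.head? = some u ∧ m.getLast? = some v
    with hRel
  haveI : IsTrans V Rel := by
    constructor
    rintro u v z ⟨m, hm2, hmc, hmh, hml⟩ ⟨m', hm'2, hm'c, hm'h, hm'l⟩
    cases m' with
    | nil => simp at hm'h
    | cons v' t =>
      have hm'h' : v' = v := by simpa using hm'h
      subst hm'h'
      refine ⟨m ++ t, ?_, ?_, ?_, ?_⟩
      · rw [List.length_append]; omega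
      · rw [List.Chain', List.isChain_append]
        refine ⟨hmc, (List.isChain_cons.1 hm'c).2, ?_⟩
        intro c hc d hd
        rw [hml] at hc
        simp only [Option.mem_def, Option.some.injEq] at hc
        subst hc
        exact (List.isChain_cons.1 hm'c).1 d hd
      · rw [List.head?_append_of_ne_nil _ (by intro h; subst h; simp at hm2), hmh]
      · cases ht : t with
        | nil =>
          subst ht
          simp only [List.getLast?_singleton, Option.some.injEq] at hm'l
          subst hm'l
          rw [List.append_nil, hml]
        | cons e t' =>
          subst ht
          rw [List.getLast?_append_of_ne_nil _ (by simp)]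
          rw [show v' :: e :: t' = [v'] ++ (e :: t') from rfl,
            List.getLast?_append_of_ne_nil _ (by simp)] at hm'l
          exact hm'l
  have hchainRel : l.Chain' Rel := by
    refine hl.imp ?_
    intro u v huv
    exact ⟨[u, v], by norm_num, List.isChain_pair.2 huv, rfl, rfl⟩
  have hpw : l.Pairwise Rel := List.isChain_iff_pairwise.1 hchainRel
  refine hpw.imp ?_
  rintro u v ⟨m, hm2, hmc, hmh, hml⟩
  intro huv
  subst huv
  exact absurd (hmh.trans hml.symm) (hacyc m hm2 hmc)





def Spec (S : Fin r → List V) (s t : Fin r) (x : V) : Prop :=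
  s < t ∧ x ∈ S s ∧ x ∈ S t ∧
  (∀ u v y, u ≠ v → y ∈ S u → y ∈ S v → s ≤ u) ∧
  (∀ y v, v ≠ s → y ∈ S s → y ∈ S v → (S s).idxOf x ≤ (S s).idxOf y) ∧
  (∀ v, v ≠ s → x ∈ S v → t ≤ v)

lemma spec_exists (S : Fin r → List V)
    (h : ∃ u v y, u ≠ v ∧ y ∈ S u ∧ y ∈ S v) : ∃ s t x, Spec S s t x := by
  classical
  obtain ⟨u₀, v₀, y₀, hne₀, hy₀u, hy₀v⟩ := h
  set A : Finset (Fin r) :=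
    Finset.univ.filter (fun u => ∃ v y, u ≠ v ∧ y ∈ S u ∧ y ∈ S v) with hA
  have hAne : A.Nonempty := ⟨u₀, Finset.mem_filter.2 ⟨Finset.mem_univ _, v₀, y₀, hne₀, hy₀u, hy₀v⟩⟩
  set s := A.min' hAne with hs
  have hsA : s ∈ A := A.min'_mem hAne
  have smin : ∀ u v y, u ≠ v → y ∈ S u → y ∈ S v → s ≤ u := by
    intro u v y h1 h2 h3
    exact A.min'_le u (Finset.mem_filter.2 ⟨Finset.mem_univ _, v, y, h1, h2, h3⟩)
  obtain ⟨vs, ys, hvs, hys1, hys2⟩ : ∃ v y, s ≠ v ∧ y ∈ S s ∧ y ∈ S v :=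
    (Finset.mem_filter.1 hsA).2
  set C : Finset V := (S s).toFinset.filter (fun y => ∃ v, v ≠ s ∧ y ∈ S v) with hC
  have hCne : C.Nonempty := ⟨ys, Finset.mem_filter.2 ⟨List.mem_toFinset.2 hys1, vs, Ne.symm hvs, hys2⟩⟩
  obtain ⟨x, hxC, hxmin⟩ := Finset.exists_min_image C (fun y => (S s).idxOf y) hCne
  have hxS : x ∈ S s := by
    have := (Finset.mem_filter.1 hxC).1; simpa using this
  obtain ⟨w₀, hw₀ne, hw₀⟩ : ∃ v, v ≠ s ∧ x ∈ S v := (Finset.mem_filter.1 hxC).2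
  set T : Finset (Fin r) := Finset.univ.filter (fun v => v ≠ s ∧ x ∈ S v) with hT
  have hTne : T.Nonempty := ⟨w₀, Finset.mem_filter.2 ⟨Finset.mem_univ _, hw₀ne, hw₀⟩⟩
  set t := T.min' hTne with ht
  have htT : t ∈ T := T.min'_mem hTne
  have htne : t ≠ s := (Finset.mem_filter.1 htT).2.1
  have hxt : x ∈ S t := (Finset.mem_filter.1 htT).2.2
  have hst : s < t := lt_of_le_of_ne (smin t s x htne hxt hxS) (Ne.symm htne)
  refine ⟨s, t, x, hst, hxS, hxt, smin, ?_, ?_⟩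
  · intro y v hv h1 h2
    exact hxmin y (Finset.mem_filter.2 ⟨List.mem_toFinset.2 h1, v, hv, h2⟩)
  · intro v hv hxv
    exact T.min'_le v (Finset.mem_filter.2 ⟨Finset.mem_univ _, hv, hxv⟩)

lemma spec_unique {S : Fin r → List V} {s t x s' t' x'}
    (h1 : Spec S s t x) (h2 : Spec S s' t' x') : s = s' ∧ t = t' ∧ x = x' := by
  obtain ⟨hst, hxs, hxt, hsmin, hxmin, htmin⟩ := h1
  obtain ⟨hst', hxs', hxt', hsmin', hxmin', htmin'⟩ := h2
  have hss : s = s' :=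
    le_antisymm (hsmin s' t' x' (ne_of_lt hst') hxs' hxt')
      (hsmin' s t x (ne_of_lt hst) hxs hxt)
  subst hss
  have hidx : (S s).idxOf x = (S s).idxOf x' :=
    le_antisymm (hxmin x' t' hst'.ne' hxs' hxt') (hxmin' x t hst.ne' hxs hxt)
  have hxx : x = x' := by
    have l1 := List.idxOf_lt_length_iff.2 hxs
    have l2 := List.idxOf_lt_length_iff.2 hxs'
    have e1 := List.idxOf_get (a := x) (l := S s) l1
    have e2 := List.idxOf_get (a := x') (l := S s) l2
    rw [← e1, ← e2]
    congr 1
    exact Fin.ext hidx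
  subst hxx
  exact ⟨rfl, le_antisymm (htmin t' hst'.ne' hxt') (htmin' t hst.ne' hxt), rfl⟩

noncomputable def pickS (S : Fin r → List V) (h : ∃ s t x, Spec S s t x) : Fin r :=
  h.choose
noncomputable def pickT (S : Fin r → List V) (h : ∃ s t x, Spec S s t x) : Fin r :=
  h.choose_spec.choose
noncomputable def pickX (S : Fin r → List V) (h : ∃ s t x, Spec S s t x) : V :=
  h.choose_spec.choose_spec.choose

lemma pick_spec (S : Fin r → List V) (h : ∃ s t x, Spec S s t x) :
    Spec S (pickS S h) (pickT S h) (pickX S h) :=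
  h.choose_spec.choose_spec.choose_spec



noncomputable def swapSys (S : Fin r → List V) (h : ∃ s t x, Spec S s t x) :
    Fin r → List V := fun u =>
  if u = pickS S h then splice (S (pickS S h)) (S (pickT S h)) (pickX S h)
  else if u = pickT S h then splice (S (pickT S h)) (S (pickS S h)) (pickX S h)
  else S u

lemma swapSys_fst (S : Fin r → List V) (h : ∃ s t x, Spec S s t x) :
    swapSys S h (pickS S h)
      = splice (S (pickS S h)) (S (pickT S h)) (pickX S h) := by
  simp [swapSys]

lemma swapSys_snd (S : Fin r → List V) (h : ∃ s t x, Spec S s t x) :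
    swapSys S h (pickT S h)
      = splice (S (pickT S h)) (S (pickS S h)) (pickX S h) := by
  have hne : pickT S h ≠ pickS S h := (pick_spec S h).1.ne'
  simp [swapSys, hne]

lemma swapSys_other (S : Fin r → List V) (h : ∃ s t x, Spec S s t x)
    (u : Fin r) (h1 : u ≠ pickS S h) (h2 : u ≠ pickT S h) :
    swapSys S h u = S u := by
  simp [swapSys, h1, h2]

lemma spec_swapSys (S : Fin r → List V) (h : ∃ s t x, Spec S s t x)
    (hnd : (S (pickS S h)).Nodup) :
    Spec (swapSys S h) (pickS S h) (pickT S h) (pickX S h) := by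
  obtain ⟨hst, hxs, hxt, hsmin, hxmin, htmin⟩ := pick_spec S h
  have hfst := swapSys_fst S h
  have hsnd := swapSys_snd S h
  have hoth := swapSys_other S h
  refine ⟨hst, ?_, ?_, ?_, ?_, ?_⟩
  · rw [hfst]; exact mem_splice_self hxs
  · rw [hsnd]; exact mem_splice_self hxt
  · intro u v y huv hyu hyv
    by_cases hus : u = pickS S h
    · exact hus.ge
    by_cases hut : u = pickT S h
    · exact hut ▸ hst.le
    rw [hoth u hus hut] at hyu
    by_cases hvs : v = pickS S h
    · subst hvs
      rw [hfst] at hyv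
      rcases mem_of_mem_splice hyv with h1 | h1
      · exact hsmin u (pickS S h) y hus hyu h1
      · exact hsmin u (pickT S h) y hut hyu h1
    by_cases hvt : v = pickT S h
    · subst hvt
      rw [hsnd] at hyv
      rcases mem_of_mem_splice hyv with h1 | h1
      · exact hsmin u (pickT S h) y hut hyu h1
      · exact hsmin u (pickS S h) y hus hyu h1
    · rw [hoth v hvs hvt] at hyv
      exact hsmin u v y huv hyu hyv
  · intro y v hv hyS' hyv
    have hk : (swapSys S h (pickS S h)).idxOf (pickX S h)
        = (S (pickS S h)).idxOf (pickX S h) := by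
      rw [hfst]; exact indexOf_splice hxs
    by_contra hcon
    push_neg at hcon
    rw [hk] at hcon
    have hytake : y ∈ (swapSys S h (pickS S h)).take
        ((S (pickS S h)).idxOf (pickX S h)) := by
      rw [mem_take_iff_indexOf]
      exact ⟨hyS', by omega⟩
    have htk : (swapSys S h (pickS S h)).take ((S (pickS S h)).idxOf (pickX S h))
        = (S (pickS S h)).take ((S (pickS S h)).idxOf (pickX S h)) := by
      rw [hfst, splice, List.take_append, length_pre hxs]
      have h0 : (S (pickS S h)).idxOf (pickX S h)
          - ((S (pickS S h)).idxOf (pickX S h) + 1) = 0 := by omega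
      rw [h0, List.take_zero, List.append_nil, pre, List.take_take]
      congr 1
      omega
    rw [htk] at hytake
    have hyS : y ∈ S (pickS S h) := List.mem_of_mem_take hytake
    have hyk : (S (pickS S h)).idxOf y < (S (pickS S h)).idxOf (pickX S h) :=
      ((mem_take_iff_indexOf _ _).1 hytake).2
    by_cases hvt : v = pickT S h
    · subst hvt
      rw [hsnd] at hyv
      rcases List.mem_append.1 hyv with h1 | h1
      · have hyt : y ∈ S (pickT S h) := List.mem_of_mem_take h1
        have := hxmin y (pickT S h) hv hyS hyt
        omega
      · simp only [post] at h1
        have hy2 : y ∈ (S (pickS S h)).drop ((S (pickS S h)).idxOf (pickX S h)) := by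
          apply List.mem_of_mem_drop (i := 1)
          rwa [List.drop_drop]
        have hdisj : List.Disjoint
            ((S (pickS S h)).take ((S (pickS S h)).idxOf (pickX S h)))
            ((S (pickS S h)).drop ((S (pickS S h)).idxOf (pickX S h))) := by
          have hnd' := hnd
          rw [← List.take_append_drop ((S (pickS S h)).idxOf (pickX S h))
            (S (pickS S h))] at hnd'
          exact List.disjoint_of_nodup_append hnd'
        exact hdisj hytake hy2
    · rw [hoth v hv hvt] at hyv
      have := hxmin y v hv hyS hyv
      omega
  · intro v hv hxv
    by_cases hvt : v = pickT S h
    · exact hvt.ge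
    · rw [hoth v hv hvt] at hxv
      exact htmin v hv hxv

lemma swapSys_swapSys (S : Fin r → List V) (h : ∃ s t x, Spec S s t x)
    (hnd : (S (pickS S h)).Nodup)
    (h' : ∃ s t x, Spec (swapSys S h) s t x) :
    pickS (swapSys S h) h' = pickS S h ∧ pickT (swapSys S h) h' = pickT S h ∧
      pickX (swapSys S h) h' = pickX S h ∧
      swapSys (swapSys S h) h' = S := by
  obtain ⟨e1, e2, e3⟩ := spec_unique (pick_spec _ h') (spec_swapSys S h hnd)
  obtain ⟨hst, hxs, hxt, -, -, -⟩ := pick_spec S h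
  refine ⟨e1, e2, e3, ?_⟩
  funext u
  have hfst := swapSys_fst S h
  have hsnd := swapSys_snd S h
  have hoth := swapSys_other S h
  have hfst' := swapSys_fst (swapSys S h) h'
  have hsnd' := swapSys_snd (swapSys S h) h'
  have hoth' := swapSys_other (swapSys S h) h'
  rw [e1, e2, e3] at hfst' hsnd'
  rw [e1, e2] at hoth'
  by_cases hus : u = pickS S h
  · subst hus
    rw [hfst', hfst, hsnd]
    exact splice_splice hxs hxt
  by_cases hut : u = pickT S h
  · subst hut
    rw [hsnd', hsnd, hfst]
    exact splice_splice hxt hxs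
  · rw [hoth' u hus hut, hoth u hus hut]

lemma prod_swapSys {R : Type*} [CommRing R] (w : V → V → R)
    (S : Fin r → List V) (h : ∃ s t x, Spec S s t x) :
    ∏ u, pathWeight w (swapSys S h u) = ∏ u, pathWeight w (S u) := by
  obtain ⟨hst, hxs, hxt, -, -, -⟩ := pick_spec S h
  rw [Finset.prod_eq_mul_prod_sdiff_singleton_of_mem (Finset.mem_univ (pickS S h))
      (fun u => pathWeight w (swapSys S h u)),
    Finset.prod_eq_mul_prod_sdiff_singleton_of_mem (Finset.mem_univ (pickS S h))
      (fun u => pathWeight w (S u))]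
  have htmem : pickT S h ∈ Finset.univ \ {pickS S h} := by
    simp [Finset.mem_sdiff, hst.ne']
  rw [Finset.prod_eq_mul_prod_sdiff_singleton_of_mem htmem
      (fun u => pathWeight w (swapSys S h u)),
    Finset.prod_eq_mul_prod_sdiff_singleton_of_mem htmem (fun u => pathWeight w (S u))]
  have htail : ∏ u ∈ (Finset.univ \ {pickS S h}) \ {pickT S h},
        pathWeight w (swapSys S h u)
      = ∏ u ∈ (Finset.univ \ {pickS S h}) \ {pickT S h}, pathWeight w (S u) := by
    apply Finset.prod_congr rfl
    intro u hu
    rw [Finset.mem_sdiff, Finset.mem_sdiff] at hu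
    rw [swapSys_other S h u (by simpa using hu.1.2) (by simpa using hu.2)]
  rw [htail, swapSys_fst, swapSys_snd, ← mul_assoc, ← mul_assoc,
    pathWeight_splice_mul w hxs hxt]

end LGV

/-- **Lindström's lemma.**  In a planar acyclic weighted directed graph with
sources `a 1, …, a n` and sinks `b 1, …, b n` (arranged compatibly with
planarity, expressed by the crossing condition `hcross`), any minor
`Δ_{I,J}(W)` of the weight matrix `W` — given by strictly increasing index maps
`f, g : Fin r → Fin n` — equals the sum of the weights of all collections of
vertex-disjoint paths connecting the sources indexed by `I` to the sinks
indexed by `J` (in order). -/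
theorem lindstrom {V R : Type*} [Fintype V] [DecidableEq V] [CommRing R]
    (adj : V → V → Prop) (w : V → V → R) (n : ℕ) (a b : Fin n → V)
    -- `P i j` is the (finite) set of all directed paths from `a i` to `b j`
    (P : Fin n → Fin n → Finset (List V))
    (hP : ∀ i j l, l ∈ P i j ↔ IsDirPath adj l (a i) (b j))
    -- acyclicity: no directed path with at least one edge returns to its start
    (hacyc : ∀ l : List V, 2 ≤ l.length → l.Chain' adj → l.head? ≠ l.getLast?)
    -- planarity: for `i < i'`, `j < j'`, any path `a i → b j'` meets any path `a i' → b j`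
    (hcross : ∀ i i' j j' : Fin n, i < i' → j < j' →
      ∀ p q : List V, IsDirPath adj p (a i) (b j') → IsDirPath adj q (a i') (b j) →
        ∃ x, x ∈ p ∧ x ∈ q)
    -- the weight matrix
    (W : Matrix (Fin n) (Fin n) R)
    (hW : ∀ i j, W i j = ∑ l ∈ P i j, pathWeight w l)
    (r : ℕ) (f g : Fin r → Fin n) (hf : StrictMono f) (hg : StrictMono g) :
    ((W.submatrix f g).det : R) =
      ∑ S ∈ (Fintype.piFinset fun t => P (f t) (g t)).filter
          (fun S => ∀ s t : Fin r, s ≠ t → ∀ x : V, x ∈ S s → x ∉ S t),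
        ∏ t, pathWeight w (S t) := by
  classical
  set F : (Σ _ : Equiv.Perm (Fin r), Fin r → List V) → R :=
    fun z => ((Equiv.Perm.sign z.1 : ℤ) : R) * ∏ t, pathWeight w (z.2 t) with hF
  set B : Finset (Σ _ : Equiv.Perm (Fin r), Fin r → List V) :=
    Finset.univ.sigma (fun σ => Fintype.piFinset fun t => P (f t) (g (σ t))) with hB
  set D : (Σ _ : Equiv.Perm (Fin r), Fin r → List V) → Prop :=
    fun z => ∀ s t, s ≠ t → ∀ x, x ∈ z.2 s → x ∉ z.2 t with hD
  -- basic facts about members of B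
  have hmemB : ∀ z : (Σ _ : Equiv.Perm (Fin r), Fin r → List V), z ∈ B →
      ∀ u, IsDirPath adj (z.2 u) (a (f u)) (b (g (z.1 u))) := by
    intro z hz u
    rw [hB, Finset.mem_sigma] at hz
    exact (hP _ _ _).1 (Fintype.mem_piFinset.1 hz.2 u)
  have hnodup : ∀ z : (Σ _ : Equiv.Perm (Fin r), Fin r → List V), z ∈ B →
      ∀ u, (z.2 u).Nodup := fun z hz u =>
    LGV.nodup_of_chain' hacyc (hmemB z hz u).2.2.2
  -- Step 1 : expand the determinant
  have key1 : (W.submatrix f g).det = ∑ z ∈ B, F z := by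
    rw [← Matrix.det_transpose, Matrix.det_apply', hB, Finset.sum_sigma]
    apply Finset.sum_congr rfl
    intro σ _
    calc ((Equiv.Perm.sign σ : ℤ) : R) * ∏ i, (W.submatrix f g).transpose (σ i) i
        = ((Equiv.Perm.sign σ : ℤ) : R) *
            ∑ S ∈ Fintype.piFinset (fun t => P (f t) (g (σ t))),
              ∏ i, pathWeight w (S i) := by
          congr 1
          rw [← Finset.prod_univ_sum]
          apply Finset.prod_congr rfl
          intro i _
          simp only [Matrix.transpose_apply, Matrix.submatrix_apply]
          exact hW _ _
      _ = ∑ S ∈ Fintype.piFinset (fun t => P (f t) (g (σ t))),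
            ((Equiv.Perm.sign σ : ℤ) : R) * ∏ i, pathWeight w (S i) :=
          Finset.mul_sum _ _ _
      _ = ∑ S ∈ Fintype.piFinset (fun t => P (f t) (g (σ t))),
            F ⟨σ, S⟩ := rfl
  -- the existence of swap data for non-disjoint systems
  have hex : ∀ z : (Σ _ : Equiv.Perm (Fin r), Fin r → List V),
      z ∈ B.filter (fun z => ¬ D z) → ∃ s t x, LGV.Spec z.2 s t x := by
    intro z hz
    have hzD : ¬ D z := (Finset.mem_filter.1 hz).2
    have hex' : ∃ s t, s ≠ t ∧ ∃ x, x ∈ z.2 s ∧ x ∈ z.2 t := by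
      by_contra hno
      push_neg at hno
      exact hzD (fun s t hst x hx1 hx2 => hno s t hst x hx1 hx2)
    obtain ⟨s, t, hst, x, hx1, hx2⟩ := hex'
    exact LGV.spec_exists z.2 ⟨s, t, x, hst, hx1, hx2⟩
  -- Step 2 : the non-disjoint part vanishes
  have key2 : ∑ z ∈ B.filter (fun z => ¬ D z), F z = 0 := by
    refine Finset.sum_involution
      (fun z hz => ⟨z.1 * Equiv.swap (LGV.pickS z.2 (hex z hz)) (LGV.pickT z.2 (hex z hz)),
        LGV.swapSys z.2 (hex z hz)⟩) ?_ ?_ ?_ ?_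
    · -- cancellation
      intro z hz
      obtain ⟨hst, hxs, hxt, -, -, -⟩ := LGV.pick_spec z.2 (hex z hz)
      simp only [hF]
      rw [LGV.prod_swapSys w z.2 (hex z hz)]
      have hs : ((Equiv.Perm.sign (z.1 * Equiv.swap (LGV.pickS z.2 (hex z hz))
            (LGV.pickT z.2 (hex z hz))) : ℤ) : R)
          = -((Equiv.Perm.sign z.1 : ℤ) : R) := by
        rw [Equiv.Perm.sign_mul, Equiv.Perm.sign_swap hst.ne]
        simp
      rw [hs]
      ring
    · -- g ≠ id on the set
      intro z hz _
      intro heq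
      obtain ⟨hst, -, -, -, -, -⟩ := LGV.pick_spec z.2 (hex z hz)
      have h1 : z.1 * Equiv.swap (LGV.pickS z.2 (hex z hz)) (LGV.pickT z.2 (hex z hz))
          = z.1 := congrArg Sigma.fst heq
      have h2 : z.1 ((Equiv.swap (LGV.pickS z.2 (hex z hz)) (LGV.pickT z.2 (hex z hz)))
          (LGV.pickS z.2 (hex z hz))) = z.1 (LGV.pickS z.2 (hex z hz)) := by
        rw [← Equiv.Perm.mul_apply, h1]
      rw [Equiv.swap_apply_left] at h2
      exact hst.ne' (z.1.injective h2)
    · -- membership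
      intro z hz
      obtain ⟨hzB, hzD⟩ := Finset.mem_filter.1 hz
      obtain ⟨hst, hxs, hxt, -, -, -⟩ := LGV.pick_spec z.2 (hex z hz)
      show (⟨z.1 * Equiv.swap (LGV.pickS z.2 (hex z hz)) (LGV.pickT z.2 (hex z hz)),
          LGV.swapSys z.2 (hex z hz)⟩ : Σ _ : Equiv.Perm (Fin r), Fin r → List V)
          ∈ Finset.filter (fun z => ¬ D z) B
      refine Finset.mem_filter.2 ⟨?_, ?_⟩
      · rw [hB]
        refine Finset.mem_sigma.2 ⟨Finset.mem_univ _, Fintype.mem_piFinset.2 ?_⟩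
        intro u
        show LGV.swapSys z.2 (hex z hz) u ∈ P (f u)
          (g ((z.1 * Equiv.swap (LGV.pickS z.2 (hex z hz)) (LGV.pickT z.2 (hex z hz))) u))
        by_cases hus : u = LGV.pickS z.2 (hex z hz)
        · rw [hus]
          have e : (z.1 * Equiv.swap (LGV.pickS z.2 (hex z hz)) (LGV.pickT z.2 (hex z hz)))
              (LGV.pickS z.2 (hex z hz)) = z.1 (LGV.pickT z.2 (hex z hz)) := by
            rw [Equiv.Perm.mul_apply, Equiv.swap_apply_left]
          rw [e, LGV.swapSys_fst]
          exact (hP _ _ _).2 (LGV.isDirPath_splice (hmemB z hzB _) (hmemB z hzB _) hxs hxt)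
        by_cases hut : u = LGV.pickT z.2 (hex z hz)
        · rw [hut]
          have e : (z.1 * Equiv.swap (LGV.pickS z.2 (hex z hz)) (LGV.pickT z.2 (hex z hz)))
              (LGV.pickT z.2 (hex z hz)) = z.1 (LGV.pickS z.2 (hex z hz)) := by
            rw [Equiv.Perm.mul_apply, Equiv.swap_apply_right]
          rw [e, LGV.swapSys_snd]
          exact (hP _ _ _).2 (LGV.isDirPath_splice (hmemB z hzB _) (hmemB z hzB _) hxt hxs)
        · have e : (z.1 * Equiv.swap (LGV.pickS z.2 (hex z hz)) (LGV.pickT z.2 (hex z hz)))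
              u = z.1 u := by
            rw [Equiv.Perm.mul_apply, Equiv.swap_apply_of_ne_of_ne hus hut]
          rw [e, LGV.swapSys_other z.2 (hex z hz) u hus hut]
          exact (hP _ _ _).2 (hmemB z hzB u)
      · intro hDg
        have hDg' : ∀ s' t', s' ≠ t' → ∀ x, x ∈ LGV.swapSys z.2 (hex z hz) s'
            → x ∉ LGV.swapSys z.2 (hex z hz) t' := hDg
        have h1 : LGV.pickX z.2 (hex z hz)
            ∈ LGV.swapSys z.2 (hex z hz) (LGV.pickS z.2 (hex z hz)) := by
          rw [LGV.swapSys_fst]; exact LGV.mem_splice_self hxs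
        have h2 : LGV.pickX z.2 (hex z hz)
            ∈ LGV.swapSys z.2 (hex z hz) (LGV.pickT z.2 (hex z hz)) := by
          rw [LGV.swapSys_snd]; exact LGV.mem_splice_self hxt
        exact hDg' _ _ hst.ne _ h1 h2
    · -- involution
      intro z hz
      have hzB := (Finset.mem_filter.1 hz).1
      obtain ⟨hst, hxs, hxt, -, -, -⟩ := LGV.pick_spec z.2 (hex z hz)
      have hnd : (z.2 (LGV.pickS z.2 (hex z hz))).Nodup := hnodup z hzB _
      have h' : ∃ s t x, LGV.Spec (LGV.swapSys z.2 (hex z hz)) s t x :=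
        ⟨_, _, _, LGV.spec_swapSys z.2 (hex z hz) hnd⟩
      obtain ⟨e1, e2, e3, e4⟩ := LGV.swapSys_swapSys z.2 (hex z hz) hnd h'
      refine Sigma.ext ?_ (heq_of_eq ?_)
      · show z.1 * Equiv.swap (LGV.pickS z.2 (hex z hz)) (LGV.pickT z.2 (hex z hz))
            * Equiv.swap (LGV.pickS (LGV.swapSys z.2 (hex z hz)) h')
              (LGV.pickT (LGV.swapSys z.2 (hex z hz)) h') = z.1
        rw [e1, e2, mul_assoc, Equiv.swap_mul_self, mul_one]
      · show LGV.swapSys (LGV.swapSys z.2 (hex z hz)) h' = z.2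
        exact e4
  -- Step 3 : the disjoint part is the desired sum
  have key3 : ∑ z ∈ B.filter (fun z => D z), F z =
      ∑ S ∈ (Fintype.piFinset fun t => P (f t) (g t)).filter
          (fun S => ∀ s t : Fin r, s ≠ t → ∀ x : V, x ∈ S s → x ∉ S t),
        ∏ t, pathWeight w (S t) := by
    have hone : ∀ z : (Σ _ : Equiv.Perm (Fin r), Fin r → List V),
        z ∈ B.filter (fun z => D z) → z.1 = 1 := by
      intro z hz
      obtain ⟨hzB, hzD⟩ := Finset.mem_filter.1 hz
      by_contra hσ
      have hns : ¬ StrictMono ⇑z.1 := by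
        intro hm
        have : ⇑z.1 = id :=
          (hm.range_inj strictMono_id).1
            (by rw [Equiv.range_eq_univ, Set.range_id])
        exact hσ (Equiv.ext fun u => congrFun this u)
      rw [StrictMono] at hns
      push_neg at hns
      obtain ⟨s, t, hst, hle⟩ := hns
      have hlt : z.1 t < z.1 s :=
        lt_of_le_of_ne hle (fun hh => hst.ne (z.1.injective hh).symm)
      obtain ⟨x, hx1, hx2⟩ := hcross (f s) (f t) (g (z.1 t)) (g (z.1 s))
        (hf hst) (hg hlt) (z.2 s) (z.2 t) (hmemB z hzB s) (hmemB z hzB t)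
      exact hzD s t hst.ne x hx1 hx2
    refine Finset.sum_bij' (fun z _ => z.2) (fun S _ => ⟨1, S⟩) ?_ ?_ ?_ ?_ ?_
    · intro z hz
      obtain ⟨hzB, hzD⟩ := Finset.mem_filter.1 hz
      rw [Finset.mem_filter]
      constructor
      · rw [Fintype.mem_piFinset]
        intro u
        have := (hP _ _ _).2 (hmemB z hzB u)
        rwa [hone z hz] at this
      · exact hzD
    · intro S hS
      obtain ⟨hS1, hS2⟩ := Finset.mem_filter.1 hS
      rw [Finset.mem_filter]
      refine ⟨?_, hS2⟩
      rw [hB, Finset.mem_sigma]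
      exact ⟨Finset.mem_univ _, by simpa using hS1⟩
    · intro z hz
      obtain ⟨σ, S⟩ := z
      have h1 : σ = 1 := hone _ hz
      subst h1
      rfl
    · intro S hS
      rfl
    · intro z hz
      have h1 : z.1 = 1 := hone z hz
      simp only [hF, h1]
      simp
  rw [key1, ← Finset.sum_filter_add_sum_filter_not B (fun z => D z) F, key2, add_zero,
    key3]
end

section
/- Motzkin's theorem: A totally non-negative real matrix M is variation-decreasing, i.e., for every nonzero vector x, Var⁻(Mx) ≤ Var⁻(x). -/
open Set Matrix

/-- `Var⁻(u)`: the number of sign changes of the vector `u`, i.e. the number of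
pairs `i < j` with `u i · u j < 0` and `u k = 0` for all `i < k < j`. -/
noncomputable def signChanges {n : ℕ} (u : Fin n → ℝ) : ℕ :=
  Set.ncard {p : Fin n × Fin n |
    p.1 < p.2 ∧ u p.1 * u p.2 < 0 ∧ ∀ k, p.1 < k → k < p.2 → u k = 0}

/-- The set of sign-change pairs. -/
def scSet {n : ℕ} (u : Fin n → ℝ) : Set (Fin n × Fin n) :=
  {p : Fin n × Fin n |
    p.1 < p.2 ∧ u p.1 * u p.2 < 0 ∧ ∀ k, p.1 < k → k < p.2 → u k = 0}

lemma signChanges_eq {n : ℕ} (u : Fin n → ℝ) : signChanges u = (scSet u).ncard := rfl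

lemma scSet_fst_injOn {n : ℕ} (u : Fin n → ℝ) : Set.InjOn Prod.fst (scSet u) := by
  rintro ⟨i, j⟩ ⟨hij, hprod, hmid⟩ ⟨i', j'⟩ ⟨hij', hprod', hmid'⟩ h
  simp only at h
  subst h
  by_contra hne
  simp only [Prod.mk.injEq, true_and] at hne ⊢
  rcases lt_or_gt_of_ne (fun h : j = j' => hne (by simp [h])) with h | h
  · have := hmid' j hij h
    simp only at hprod
    rw [this, mul_zero] at hprod; exact lt_irrefl 0 hprod
  · have := hmid j' hij' h
    simp only at hprod'
    rw [this, mul_zero] at hprod'; exact lt_irrefl 0 hprod'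

lemma scSet_snd_injOn {n : ℕ} (u : Fin n → ℝ) : Set.InjOn Prod.snd (scSet u) := by
  rintro ⟨i, j⟩ ⟨hij, hprod, hmid⟩ ⟨i', j'⟩ ⟨hij', hprod', hmid'⟩ h
  simp only at h
  subst h
  by_contra hne
  simp only [Prod.mk.injEq, and_true] at hne ⊢
  rcases lt_or_gt_of_ne (fun h : i = i' => hne (by simp [h])) with h | h
  · have := hmid i' h hij'
    simp only at hprod'
    rw [this, zero_mul] at hprod'; exact lt_irrefl 0 hprod'
  · have := hmid' i h hij
    simp only at hprod
    rw [this, zero_mul] at hprod; exact lt_irrefl 0 hprod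

/-- general bound: `signChanges u ≤ n - 1`. -/
lemma signChanges_le {n : ℕ} (u : Fin n → ℝ) : signChanges u ≤ n - 1 := by
  cases n with
  | zero =>
      have : scSet u = ∅ := Set.eq_empty_of_isEmpty _
      simp [signChanges_eq, this]
  | succ k =>
      rw [signChanges_eq]
      have h := Set.ncard_le_ncard_of_injOn Prod.fst
        (t := ↑(Finset.univ.erase (Fin.last k)))
        (fun p hp => by
          simp only [Finset.coe_erase, Set.mem_diff, Set.mem_singleton_iff]
          refine ⟨by simp, fun h => ?_⟩
          have h1 : p.1 < p.2 := hp.1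
          rw [h] at h1
          exact absurd h1 (Fin.le_last p.2).not_gt)
        (scSet_fst_injOn u) (Set.toFinite _)
      rw [Set.ncard_coe_finset] at h
      simpa using h

/-- lower bound from a strictly alternating vector (adjacent flips). -/
lemma le_signChanges_of_adjacent {k : ℕ} (u : Fin (k + 1) → ℝ)
    (h : ∀ i : Fin k, u i.castSucc * u i.succ < 0) : k ≤ signChanges u := by
  rw [signChanges_eq]
  have h' := Set.ncard_le_ncard_of_injOn
    (fun i : Fin k => ((i.castSucc, i.succ) : Fin (k+1) × Fin (k+1)))
    (s := (Set.univ : Set (Fin k))) (t := scSet u)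
    (fun i _ => by
      refine ⟨(Fin.castSucc_lt_succ : i.castSucc < i.succ), h i, fun l h1 h2 => ?_⟩
      exfalso
      have h2' : (l : ℕ) < (i : ℕ) + 1 := h2
      have h1' : (i : ℕ) < (l : ℕ) := h1
      omega)
    (fun a _ b _ hab => by
      simpa [Fin.ext_iff] using congrArg (fun p => (p.1 : ℕ)) hab)
    (Set.toFinite _)
  simpa [Set.ncard_univ] using h'

/-- Between any two indices with opposite signs there is a sign-change pair. -/
lemma exists_pair_between_aux {n : ℕ} (u : Fin n → ℝ) :
    ∀ d : ℕ, ∀ a b : Fin n, (b : ℕ) - (a : ℕ) ≤ d → a < b → u a * u b < 0 →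
      ∃ p ∈ scSet u, a ≤ p.1 ∧ p.2 ≤ b := by
  intro d
  induction d with
  | zero => intro a b hd hab _; exfalso; have : (a:ℕ) < b := hab; omega
  | succ d ih =>
      intro a b hd hab hprod
      by_cases hmid : ∀ k, a < k → k < b → u k = 0
      · exact ⟨(a, b), ⟨hab, hprod, hmid⟩, le_refl _, le_refl _⟩
      · push_neg at hmid
        obtain ⟨c, hac, hcb, hc⟩ := hmid
        by_cases h1 : u a * u c < 0
        · obtain ⟨p, hp, h2, h3⟩ := ih a c (by
            have : (c:ℕ) < (b:ℕ) := hcb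
            have : (a:ℕ) < (c:ℕ) := hac
            omega) hac h1
          exact ⟨p, hp, h2, h3.trans hcb.le⟩
        · push_neg at h1
          have h2 : u c * u b < 0 := by
            by_contra h2'
            push_neg at h2'
            have key := mul_nonneg h1 h2'
            have hcc : 0 < u c * u c := mul_self_pos.2 hc
            nlinarith [key, hcc, hprod]
          obtain ⟨p, hp, h3, h4⟩ := ih c b (by
            have : (a:ℕ) < (c:ℕ) := hac
            omega) hcb h2
          exact ⟨p, hp, hac.le.trans h3, h4⟩

/-- key structural fact: successive sign-change pairs are "nested". -/
lemma scSet_snd_le {n : ℕ} {u : Fin n → ℝ} {i j i' j' : Fin n}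
    (h : (i, j) ∈ scSet u) (h' : (i', j') ∈ scSet u) (hii : i < i') : j ≤ i' := by
  by_contra hlt
  push_neg at hlt
  have h0 : u i' = 0 := h.2.2 i' hii hlt
  have := h'.2.1
  rw [h0, zero_mul] at this
  exact lt_irrefl 0 this

lemma exists_pair_between {n : ℕ} (u : Fin n → ℝ) (a b : Fin n)
    (hab : a < b) (hprod : u a * u b < 0) :
    ∃ p ∈ scSet u, a ≤ p.1 ∧ p.2 ≤ b :=
  exists_pair_between_aux u ((b : ℕ) - (a : ℕ)) a b le_rfl hab hprod

/-- extraction of an alternating subsequence of length `k+2` from `signChanges ≥ k+1`. -/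
lemma exists_alternating {n k : ℕ} (u : Fin n → ℝ) (hk : k + 1 ≤ signChanges u) :
    ∃ f : Fin (k + 2) → Fin n, StrictMono f ∧
      ∀ t : Fin (k + 1), u (f t.castSucc) * u (f t.succ) < 0 := by
  classical
  set S' : Finset (Fin n × Fin n) := (Set.toFinite (scSet u)).toFinset with hS'
  have hS'coe : (S' : Set (Fin n × Fin n)) = scSet u := Set.Finite.coe_toFinset _
  have hcard : signChanges u = S'.card := by
    rw [signChanges_eq, Set.ncard_eq_toFinset_card' ]
    congr 1
    apply Finset.coe_injective
    rw [hS'coe, Set.coe_toFinset]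
  set F : Finset (Fin n) := S'.image Prod.fst with hF
  have hFcard : F.card = S'.card := by
    apply Finset.card_image_of_injOn
    rw [hS'coe]
    exact scSet_fst_injOn u
  -- get K' with S'.card = K' + 1
  obtain ⟨K', hK'⟩ : ∃ K', S'.card = K' + 1 := ⟨S'.card - 1, by omega⟩
  have hFcard' : F.card = K' + 1 := by rw [hFcard, hK']
  set e : Fin (K' + 1) ↪o Fin n := F.orderEmbOfFin hFcard' with he
  have he_mem : ∀ t, e t ∈ F := fun t => F.orderEmbOfFin_mem hFcard' t
  have he_range : Set.range e = ↑F := F.range_orderEmbOfFin hFcard'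
  -- partners
  have hspec : ∀ t : Fin (K' + 1), ∃ d, (e t, d) ∈ scSet u := by
    intro t
    have := he_mem t
    rw [hF, Finset.mem_image] at this
    obtain ⟨p, hp, hpe⟩ := this
    refine ⟨p.2, ?_⟩
    have : p ∈ scSet u := by rw [← hS'coe]; exact_mod_cast hp
    rwa [← hpe, Prod.mk.eta]
  set J : Fin (K' + 1) → Fin n := fun t => Classical.choose (hspec t) with hJ
  have hJ_mem : ∀ t, (e t, J t) ∈ scSet u := fun t => Classical.choose_spec (hspec t)
  have hJ_gt : ∀ t, e t < J t := fun t => (hJ_mem t).1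
  have hJ_ne : ∀ t, u (J t) ≠ 0 := by
    intro t h0
    have := (hJ_mem t).2.1
    rw [h0, mul_zero] at this
    exact lt_irrefl 0 this
  have hJ_le : ∀ t : Fin K', J t.castSucc ≤ e t.succ := by
    intro t
    exact scSet_snd_le (hJ_mem t.castSucc) (hJ_mem t.succ)
      (e.strictMono (Fin.castSucc_lt_succ : t.castSucc < t.succ))
  -- same sign across gaps
  have hgap : ∀ t : Fin K', 0 < u (J t.castSucc) * u (e t.succ) := by
    intro t
    rcases eq_or_lt_of_le (hJ_le t) with h | h
    · rw [h]
      have hne : u (e t.succ) ≠ 0 := h ▸ hJ_ne t.castSucc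
      exact mul_self_pos.2 hne
    · by_contra hle
      push_neg at hle
      have hne1 : u (J t.castSucc) ≠ 0 := hJ_ne t.castSucc
      have hne2 : u (e t.succ) ≠ 0 := by
        intro h0
        have := (hJ_mem t.succ).2.1
        rw [h0, zero_mul] at this
        exact lt_irrefl 0 this
      have hlt : u (J t.castSucc) * u (e t.succ) < 0 := by
        rcases lt_or_eq_of_le hle with h' | h'
        · exact h'
        · exfalso; rcases mul_eq_zero.1 h' with h'' | h''
          · exact hne1 h''
          · exact hne2 h''
      obtain ⟨p, hp, h1, h2⟩ := exists_pair_between u _ _ h hlt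
      -- p.1 ∈ F so p.1 = e r
      have hp1F : p.1 ∈ F := by
        rw [hF, Finset.mem_image]
        exact ⟨p, by rw [← hS'coe] at hp; exact_mod_cast hp, rfl⟩
      have : p.1 ∈ Set.range e := by rw [he_range]; exact_mod_cast hp1F
      obtain ⟨r, hr⟩ := this
      have hlow : e t.castSucc < e r := by
        rw [hr]; exact lt_of_lt_of_le (hJ_gt t.castSucc) h1
      have hhigh : e r < e t.succ := by
        rw [hr]; exact lt_of_lt_of_le hp.1 h2
      have h1' : t.castSucc < r := e.strictMono.lt_iff_lt.1 hlow
      have h2' : r < t.succ := e.strictMono.lt_iff_lt.1 hhigh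
      have : (t : ℕ) < (r : ℕ) := h1'
      have : (r : ℕ) < (t : ℕ) + 1 := h2'
      omega
  -- the alternating sequence of length K' + 2
  set g : Fin (K' + 2) → Fin n := Fin.cases (e 0) J with hg
  have hg0 : g 0 = e 0 := rfl
  have hgs : ∀ t : Fin (K' + 1), g t.succ = J t := fun t => by
    rw [hg]; exact Fin.cases_succ t
  have hgmono : StrictMono g := by
    rw [Fin.strictMono_iff_lt_succ]
    intro t
    induction t using Fin.cases with
    | zero =>
        have : g (Fin.castSucc 0) = e 0 := rfl
        rw [this, hgs 0]
        exact hJ_gt 0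
    | succ s =>
        have h1 : g s.succ.castSucc = J s.castSucc := by
          rw [← Fin.succ_castSucc, hgs]
        rw [h1, hgs]
        exact lt_of_le_of_lt (hJ_le s) (hJ_gt s.succ)
  have hgalt : ∀ t : Fin (K' + 1), u (g t.castSucc) * u (g t.succ) < 0 := by
    intro t
    induction t using Fin.cases with
    | zero =>
        have : g (Fin.castSucc 0) = e 0 := rfl
        rw [this, hgs 0]
        exact (hJ_mem 0).2.1
    | succ s =>
        have h1 : g s.succ.castSucc = J s.castSucc := by
          rw [← Fin.succ_castSucc, hgs]
        rw [h1, hgs]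
        -- u (J s.castSucc) * u (J s.succ) < 0
        have hpos := hgap s
        have hneg := (hJ_mem s.succ).2.1
        nlinarith [hpos, hneg, mul_self_pos.2 (hJ_ne s.castSucc),
          mul_self_pos.2 (fun h0 : u (e s.succ) = 0 => by
            rw [h0, zero_mul] at hneg; exact lt_irrefl 0 hneg)]
  -- truncate
  have hkK : k + 1 ≤ K' + 1 := by rw [hcard, hK'] at hk; omega
  have hle : k + 2 ≤ K' + 2 := by omega
  refine ⟨fun s => g (Fin.castLE hle s), ?_, ?_⟩
  · intro a b hab
    apply hgmono
    simp only [Fin.lt_def, Fin.coe_castLE]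
    exact hab
  · intro t
    have ht'lt : (t : ℕ) < K' + 1 := by omega
    set t' : Fin (K' + 1) := ⟨t.val, ht'lt⟩ with ht'
    have h1 : Fin.castLE hle t.castSucc = t'.castSucc := by
      apply Fin.ext; rfl
    have h2 : Fin.castLE hle t.succ = t'.succ := by
      apply Fin.ext; rfl
    show u (g (Fin.castLE hle t.castSucc)) * u (g (Fin.castLE hle t.succ)) < 0
    rw [h1, h2]
    exact hgalt t'

/-- deleting a zero entry does not increase (in fact preserves) sign changes. -/
lemma signChanges_delete_zero {k : ℕ} (u : Fin (k + 1) → ℝ) (j : Fin (k + 1))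
    (hj : u j = 0) : signChanges (u ∘ j.succAbove) ≤ signChanges u := by
  rw [signChanges_eq, signChanges_eq]
  apply Set.ncard_le_ncard_of_injOn
    (fun p => (j.succAbove p.1, j.succAbove p.2)) _ _ (Set.toFinite _)
  · rintro ⟨a, b⟩ ⟨hab, hprod, hmid⟩
    refine ⟨(Fin.strictMono_succAbove j) hab, hprod, fun c h1 h2 => ?_⟩
    by_cases hc : c = j
    · rw [hc]; exact hj
    · obtain ⟨z, hz⟩ := Fin.exists_succAbove_eq hc
      rw [← hz] at h1 h2 ⊢
      exact hmid z ((Fin.strictMono_succAbove j).lt_iff_lt.1 h1)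
        ((Fin.strictMono_succAbove j).lt_iff_lt.1 h2)
  · rintro ⟨a, b⟩ _ ⟨a', b'⟩ _ h
    simp only [Prod.mk.injEq] at h
    have hinj := (Fin.strictMono_succAbove j).injective
    exact Prod.ext (hinj h.1) (hinj h.2)

/-- adjacent-pair characterization: if `u` has no zero entries, every sign-change
pair is adjacent. -/
lemma scSet_adjacent {n : ℕ} {u : Fin n → ℝ} (hu : ∀ t, u t ≠ 0)
    {a b : Fin n} (h : (a, b) ∈ scSet u) : (b : ℕ) = (a : ℕ) + 1 := by
  obtain ⟨hab, hprod, hmid⟩ := h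
  by_contra hne
  have hab' : (a : ℕ) < (b : ℕ) := hab
  have hlt : (a : ℕ) + 1 < (b : ℕ) := by omega
  have hcn : (a : ℕ) + 1 < n := lt_trans hlt b.isLt
  set c : Fin n := ⟨(a : ℕ) + 1, hcn⟩ with hc
  exact hu c (hmid c (by simp [hc, Fin.lt_def]) (by simpa [hc, Fin.lt_def] using hlt))

/-- merging two adjacent same-signed entries does not increase sign changes. -/
lemma signChanges_delete_same_sign {k : ℕ} (u : Fin (k + 2) → ℝ)
    (hu : ∀ t, u t ≠ 0) (i : Fin (k + 1))
    (hsame : 0 < u i.castSucc * u i.succ) :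
    signChanges (u ∘ (i.succ).succAbove) ≤ signChanges u := by
  classical
  set q : Fin (k + 2) := i.succ with hq
  set p : Fin (k + 2) := i.castSucc with hp
  set sa : Fin (k + 1) → Fin (k + 2) := q.succAbove with hsa
  have hsamono : StrictMono sa := Fin.strictMono_succAbove q
  have hu' : ∀ t, (u ∘ sa) t ≠ 0 := fun t => hu (sa t)
  have hqval : (q : ℕ) = (i : ℕ) + 1 := rfl
  have hpval : (p : ℕ) = (i : ℕ) := rfl
  have hsaval : ∀ t : Fin (k + 1), (sa t : ℕ) = if (t : ℕ) < (q : ℕ) then (t : ℕ) else (t : ℕ) + 1 := by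
    intro t
    by_cases h : (t : ℕ) < (q : ℕ)
    · rw [if_pos h]
      rw [hsa, Fin.succAbove_of_castSucc_lt]
      · rfl
      · rwa [Fin.lt_def]
    · rw [if_neg h]
      rw [hsa, Fin.succAbove_of_le_castSucc]
      · rfl
      · rw [Fin.le_def]; push_neg at h; exact h
  rw [signChanges_eq, signChanges_eq]
  apply Set.ncard_le_ncard_of_injOn
    (fun x => if sa x.1 = p then (q, sa x.2) else (sa x.1, sa x.2)) _ _ (Set.toFinite _)
  · rintro ⟨a, b⟩ hmem
    have hadj : (b : ℕ) = (a : ℕ) + 1 := scSet_adjacent hu' hmem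
    obtain ⟨hab, hprod, -⟩ := hmem
    by_cases hcase : sa a = p
    · have hres : (fun x : Fin (k+1) × Fin (k+1) =>
        if sa x.1 = p then (q, sa x.2) else (sa x.1, sa x.2)) (a, b) = (q, sa b) := by
        simp only [hcase, if_true]
      rw [show (if sa (a, b).1 = p then (q, sa (a, b).2) else (sa (a, b).1, sa (a, b).2)) = (q, sa b) from hres]
      have haval : (a : ℕ) = (i : ℕ) := by
        have := hsaval a
        rw [hcase, hpval] at this
        by_cases h : (a : ℕ) < (q : ℕ)
        · rw [if_pos h] at this; omega
        · rw [if_neg h] at this; omega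
      have hbval : (sa b : ℕ) = (i : ℕ) + 2 := by
        have := hsaval b
        rw [if_neg (by omega)] at this
        omega
      have hprod' : u p * u (sa b) < 0 := by
        have heq : u (sa a) = u p := by rw [hcase]
        have := hprod
        simp only [Function.comp_apply] at this
        rw [heq] at this
        exact this
      refine ⟨?_, ?_, ?_⟩
      · show q < sa b
        rw [Fin.lt_def]; omega
      · show u q * u (sa b) < 0
        nlinarith [mul_self_pos.2 (hu p), hsame, hprod']
      · intro c h1 h2
        exfalso
        have h1' : (q : ℕ) < (c : ℕ) := h1
        have h2' : (c : ℕ) < (sa b : ℕ) := h2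
        omega
    · have hres : (fun x : Fin (k+1) × Fin (k+1) =>
        if sa x.1 = p then (q, sa x.2) else (sa x.1, sa x.2)) (a, b) = (sa a, sa b) := by
        simp only [hcase, if_false]
      rw [show (if sa (a, b).1 = p then (q, sa (a, b).2) else (sa (a, b).1, sa (a, b).2)) = (sa a, sa b) from hres]
      have hadj2 : (sa b : ℕ) = (sa a : ℕ) + 1 := by
        have h1 := hsaval a
        have h2 := hsaval b
        by_cases h : (a : ℕ) < (q : ℕ)
        · have haq : (a : ℕ) ≠ (i : ℕ) := by
            intro hh
            apply hcase
            apply Fin.ext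
            rw [h1, if_pos h, hpval, hh]
          by_cases h' : (b : ℕ) < (q : ℕ)
          · rw [if_pos h] at h1; rw [if_pos h'] at h2; omega
          · rw [if_pos h] at h1; rw [if_neg h'] at h2; omega
        · rw [if_neg h] at h1
          rw [if_neg (by omega)] at h2
          omega
      refine ⟨?_, ?_, ?_⟩
      · show sa a < sa b
        rw [Fin.lt_def]; omega
      · exact hprod
      · intro c h1 h2
        exfalso
        have h1' : ((sa a) : ℕ) < (c : ℕ) := h1
        have h2' : (c : ℕ) < ((sa b) : ℕ) := h2
        omega
  · rintro ⟨a, b⟩ _ ⟨a', b'⟩ _ h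
    have hinj := hsamono.injective
    simp only at h
    by_cases h1 : sa a = p <;> by_cases h2 : sa a' = p
    · rw [if_pos h1, if_pos h2] at h
      obtain ⟨-, hb⟩ := Prod.mk.injEq .. ▸ (by exact h : (q, sa b) = (q, sa b'))
      have hb' : sa b = sa b' := congrArg Prod.snd h
      exact Prod.ext (hinj (h1.trans h2.symm)) (hinj hb')
    · rw [if_pos h1, if_neg h2] at h
      exact absurd (congrArg Prod.fst h).symm (Fin.succAbove_ne q a')
    · rw [if_neg h1, if_pos h2] at h
      exact absurd (congrArg Prod.fst h) (Fin.succAbove_ne q a)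
    · rw [if_neg h1, if_neg h2] at h
      exact Prod.ext (hinj (congrArg Prod.fst h)) (hinj (congrArg Prod.snd h))

/-- a tall `(m+1) × m` matrix all of whose maximal minors vanish has a
nontrivial kernel vector. -/
lemma exists_kernel_of_minors_zero {m : ℕ} (C : Matrix (Fin (m + 1)) (Fin m) ℝ)
    (h : ∀ j : Fin (m + 1), (C.submatrix j.succAbove id).det = 0) :
    ∃ c : Fin m → ℝ, c ≠ 0 ∧ C.mulVec c = 0 := by
  classical
  by_contra hcon
  push_neg at hcon
  -- columns are linearly independent
  set v : Fin m → (Fin (m + 1) → ℝ) := fun j i => C i j with hv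
  have hli : LinearIndependent ℝ v := by
    rw [Fintype.linearIndependent_iff]
    intro g hg j
    by_contra hgj
    have hgne : g ≠ 0 := fun h0 => hgj (by rw [h0]; rfl)
    apply hgj
    have : C.mulVec g = 0 := by
      funext i
      have := congrFun hg i
      simpa [Matrix.mulVec, dotProduct, mul_comm] using this
    exact absurd this (hcon g hgne)
  -- find a standard basis vector outside the span
  have hspan : ∃ i : Fin (m + 1), (Pi.single i (1:ℝ)) ∉ Submodule.span ℝ (Set.range v) := by
    by_contra hall
    push_neg at hall
    have htop : Submodule.span ℝ (Set.range v) = ⊤ := by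
      rw [eq_top_iff]
      intro w _
      have : w = ∑ i, w i • (Pi.single i (1:ℝ) : Fin (m+1) → ℝ) := by
        funext r
        simp [Pi.single_apply, Finset.sum_apply, mul_comm]
      rw [this]
      exact Submodule.sum_mem _ fun i _ => Submodule.smul_mem _ _ (hall i)
    have h1 : Module.finrank ℝ (Fin (m + 1) → ℝ) ≤ m := by
      rw [← finrank_top ℝ (Fin (m+1) → ℝ), ← htop]
      exact (finrank_range_le_card v).trans (by simp)
    rw [Module.finrank_pi] at h1
    simp at h1
  obtain ⟨i0, hi0⟩ := hspan
  have hli2 : LinearIndependent ℝ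
      ((Fin.snoc v (Pi.single i0 (1:ℝ)) : Fin (m + 1) → (Fin (m + 1) → ℝ))) :=
    linearIndependent_fin_snoc.2 ⟨hli, hi0⟩
  set w : Fin (m + 1) → (Fin (m + 1) → ℝ) :=
    (Fin.snoc v (Pi.single i0 (1:ℝ)) : Fin (m + 1) → (Fin (m + 1) → ℝ)) with hw
  set D : Matrix (Fin (m + 1)) (Fin (m + 1)) ℝ := Matrix.of fun r j => w j r with hD
  have hDunit : IsUnit D := by
    rw [← Matrix.linearIndependent_cols_iff_isUnit]
    exact hli2
  have hDdet : D.det ≠ 0 := by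
    intro h0
    have := hDunit
    rw [Matrix.isUnit_iff_isUnit_det, h0, isUnit_zero_iff] at this
    exact one_ne_zero this.symm
  apply hDdet
  rw [Matrix.det_succ_column D (Fin.last m)]
  apply Finset.sum_eq_zero
  intro i _
  have hcol : D i (Fin.last m) = (Pi.single i0 (1:ℝ) : Fin (m+1) → ℝ) i := by
    simp [hD, hw, Fin.snoc_last]
  have hsub : (D.submatrix i.succAbove (Fin.last m).succAbove).det = 0 := by
    have : D.submatrix i.succAbove (Fin.last m).succAbove
        = C.submatrix i.succAbove id := by
      funext r j
      simp [hD, hw, Matrix.submatrix, Fin.succAbove_last, Fin.snoc_castSucc, hv]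
    rw [this]
    exact h i
  rw [hsub]
  ring

/-- alternating signs lemma -/
lemma alt_sign {N : ℕ} (y : Fin (N + 1) → ℝ)
    (halt : ∀ t : Fin N, y t.castSucc * y t.succ < 0) (hN : 0 < N) :
    ∃ ε : ℝ, ε * ε = 1 ∧ ∀ j : Fin (N + 1), 0 < (-1 : ℝ) ^ (j : ℕ) * y j * ε := by
  set ε : ℝ := if 0 < y 0 then 1 else -1 with hε
  have hεsq : ε * ε = 1 := by
    rw [hε]; split <;> norm_num
  refine ⟨ε, hεsq, ?_⟩
  intro j
  induction j using Fin.induction with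
  | zero =>
      have h0 : y 0 ≠ 0 := by
        intro h
        have := halt ⟨0, hN⟩
        have hc : (⟨0, hN⟩ : Fin N).castSucc = 0 := rfl
        rw [hc, h, zero_mul] at this
        exact lt_irrefl 0 this
      simp only [Fin.val_zero, pow_zero, one_mul]
      rw [hε]
      split
      · simpa using (by assumption : 0 < y 0)
      · push_neg at *
        have : y 0 < 0 := lt_of_le_of_ne (by assumption) h0
        nlinarith
  | succ t ih =>
      have hAB := halt t
      set A := y t.castSucc with hA
      set B := y t.succ with hB
      have hA0 : A ≠ 0 := by
        intro h; rw [h, zero_mul] at hAB; exact lt_irrefl 0 hAB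
      have hAA : 0 < A * A := mul_self_pos.2 hA0
      have hval : ((t.succ : Fin (N + 1)) : ℕ) = (t : ℕ) + 1 := rfl
      have hcs : ((t.castSucc : Fin (N + 1)) : ℕ) = (t : ℕ) := rfl
      rw [hval, pow_succ]
      rw [hcs] at ih
      nlinarith [ih, hAB, hAA]

/-- if `C x` strictly alternates, then all maximal minors of the TNN matrix `C` vanish -/
lemma minors_vanish {m : ℕ} (C : Matrix (Fin (m + 2)) (Fin (m + 1)) ℝ)
    (hminor : ∀ j : Fin (m + 2), 0 ≤ (C.submatrix j.succAbove id).det)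
    (x : Fin (m + 1) → ℝ)
    (halt : ∀ t : Fin (m + 1), C.mulVec x t.castSucc * C.mulVec x t.succ < 0) :
    ∀ j : Fin (m + 2), (C.submatrix j.succAbove id).det = 0 := by
  classical
  set y : Fin (m + 2) → ℝ := C.mulVec x with hy
  obtain ⟨ε, hεsq, hsig⟩ := alt_sign y halt (Nat.succ_pos m)
  set E : Matrix (Fin (m + 2)) (Fin (m + 2)) ℝ :=
    (Fin.snoc (fun j : Fin (m + 1) => fun r => C r j) y : Fin (m + 2) → Fin (m + 2) → ℝ) with hE
  have hE1 : ∀ j : Fin (m + 1), E j.castSucc = fun r => C r j := by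
    intro j; rw [hE]; exact Fin.snoc_castSucc _ _ _
  have hE2 : E (Fin.last (m + 1)) = y := by
    rw [hE]; exact Fin.snoc_last _ _
  -- det E = 0
  set c : Fin (m + 2) → ℝ := Fin.snoc (fun j => x j) 0 with hc
  set A : Matrix (Fin (m + 2)) (Fin (m + 2)) ℝ := E.updateRow (Fin.last (m + 1)) 0 with hAdef
  have hsum : ∑ k, c k • A k = y := by
    rw [Fin.sum_univ_castSucc]
    have h1 : ∀ j : Fin (m + 1), c j.castSucc • A j.castSucc = x j • (fun r => C r j) := by
      intro j
      have hne : j.castSucc ≠ Fin.last (m + 1) := (Fin.castSucc_lt_last j).ne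
      rw [hAdef, Matrix.updateRow_ne hne, hE1 j, hc]
      congr 1
      exact Fin.snoc_castSucc _ _ _
    have h2 : c (Fin.last (m + 1)) = 0 := by rw [hc]; exact Fin.snoc_last _ _
    rw [h2, zero_smul, add_zero]
    funext r
    simp only [Finset.sum_apply]
    rw [Finset.sum_congr rfl (fun j _ => by rw [h1 j])]
    simp only [Pi.smul_apply, smul_eq_mul]
    rw [hy, Matrix.mulVec]
    simp [dotProduct, mul_comm]
  have hdetE : E.det = 0 := by
    have hEeq : E = A.updateRow (Fin.last (m + 1)) (∑ k, c k • A k) := by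
      rw [hsum]
      funext i jj
      by_cases hi : i = Fin.last (m + 1)
      · subst hi
        rw [Matrix.updateRow_self]
        exact congrFun hE2 jj
      · rw [Matrix.updateRow_ne hi, hAdef, Matrix.updateRow_ne hi]
    rw [hEeq, Matrix.det_updateRow_sum A (Fin.last (m + 1)) c]
    have : c (Fin.last (m + 1)) = 0 := by rw [hc]; exact Fin.snoc_last _ _
    rw [this, zero_smul]
  -- Laplace expansion along the last row
  have hexp : (0:ℝ) = ∑ j : Fin (m + 2),
      (-1 : ℝ) ^ ((m + 1) + (j : ℕ)) * y j * (C.submatrix j.succAbove id).det := by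
    rw [← hdetE, Matrix.det_succ_row E (Fin.last (m + 1))]
    apply Finset.sum_congr rfl
    intro j _
    have h1 : E (Fin.last (m + 1)) j = y j := by rw [hE2]
    have h2 : (E.submatrix (Fin.last (m + 1)).succAbove j.succAbove).det
        = (C.submatrix j.succAbove id).det := by
      rw [← Matrix.det_transpose (C.submatrix j.succAbove id)]
      congr 1
      funext r s
      rw [Matrix.submatrix_apply, Fin.succAbove_last, Matrix.transpose_apply,
        Matrix.submatrix_apply]
      have := congrFun (hE1 r) (j.succAbove s)
      rw [this]
      rfl
    rw [h1, h2]
    have h3 : ((Fin.last (m + 1) : Fin (m + 2)) : ℕ) = m + 1 := rfl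
    rw [h3]
  -- transform into a sum of non-negative terms
  have hkey : ∑ j : Fin (m + 2),
      ((-1 : ℝ) ^ (j : ℕ) * y j * ε) * (C.submatrix j.succAbove id).det = 0 := by
    have hfactor : ∀ j : Fin (m + 2),
        ((-1 : ℝ) ^ (j : ℕ) * y j * ε) * (C.submatrix j.succAbove id).det
        = ((-1 : ℝ) ^ (m + 1) * ε) *
          ((-1 : ℝ) ^ ((m + 1) + (j : ℕ)) * y j * (C.submatrix j.succAbove id).det) := by
      intro j
      have hpow : (-1 : ℝ) ^ ((m + 1) + (j : ℕ)) = (-1 : ℝ) ^ (m + 1) * (-1 : ℝ) ^ (j : ℕ) :=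
        pow_add _ _ _
      have hsq : (-1 : ℝ) ^ (m + 1) * (-1 : ℝ) ^ (m + 1) = 1 := by
        rw [← pow_add]
        exact Even.neg_one_pow ⟨m + 1, by ring⟩
      rw [hpow]
      linear_combination (-((-1:ℝ) ^ (j : ℕ) * y j * ε * (C.submatrix j.succAbove id).det)) * hsq
    rw [Finset.sum_congr rfl (fun j _ => hfactor j), ← Finset.mul_sum, ← hexp, mul_zero]
  intro j
  have hterm : ∀ i : Fin (m + 2), i ∈ Finset.univ → (0:ℝ) ≤
      ((-1 : ℝ) ^ (i : ℕ) * y i * ε) * (C.submatrix (Fin.succAbove i) id).det :=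
    fun i _ => mul_nonneg (hsig i).le (hminor i)
  have := (Finset.sum_eq_zero_iff_of_nonneg hterm).1 hkey j (Finset.mem_univ j)
  rcases mul_eq_zero.1 this with h | h
  · exact absurd h (hsig j).ne'
  · exact h

lemma signChanges_zero {n : ℕ} (u : Fin n → ℝ) (h : ∀ i, u i = 0) :
    signChanges u = 0 := by
  rw [signChanges_eq]
  have : scSet u = ∅ := by
    ext ⟨a, b⟩
    simp only [scSet, Set.mem_setOf_eq, Set.mem_empty_iff_false, iff_false, not_and]
    intro _ hlt
    exfalso
    rw [h a, zero_mul] at hlt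
    exact lt_irrefl 0 hlt
  rw [this, Set.ncard_empty]

lemma motzkin_aux : ∀ m : ℕ, ∀ {n : ℕ} (M : Matrix (Fin n) (Fin m) ℝ),
    (∀ (r : ℕ) (f : Fin r → Fin n) (g : Fin r → Fin m),
      StrictMono f → StrictMono g → 0 ≤ (M.submatrix f g).det) →
    ∀ x : Fin m → ℝ, signChanges (M.mulVec x) ≤ signChanges x := by
  intro m
  induction m using Nat.strong_induction_on with
  | _ m IH =>
    intro n M hTNN x
    match m with
    | 0 =>
        have h0 : M.mulVec x = 0 := by
          funext i
          simp [Matrix.mulVec, dotProduct]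
        rw [h0]
        have := signChanges_zero (fun _ : Fin n => (0:ℝ)) (fun _ => rfl)
        simp only [Pi.zero_def] at this ⊢
        rw [this]
        exact Nat.zero_le _
    | m' + 1 =>
        by_cases hzero : ∃ j, x j = 0
        · -- Case A : delete a zero entry
          obtain ⟨j, hj⟩ := hzero
          set M' : Matrix (Fin n) (Fin m') ℝ := M.submatrix id j.succAbove with hM'
          set x' : Fin m' → ℝ := x ∘ j.succAbove with hx'
          have hTNN' : ∀ (r : ℕ) (f : Fin r → Fin n) (g : Fin r → Fin m'),
              StrictMono f → StrictMono g → 0 ≤ (M'.submatrix f g).det := by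
            intro r f g hf hg
            rw [hM', Matrix.submatrix_submatrix]
            exact hTNN r (id ∘ f) (j.succAbove ∘ g) (by simpa using hf)
              ((Fin.strictMono_succAbove j).comp hg)
          have hmv : M'.mulVec x' = M.mulVec x := by
            funext i
            rw [hM', hx']
            show ∑ t, M i (j.succAbove t) * x (j.succAbove t) = ∑ s, M i s * x s
            rw [Fin.sum_univ_succAbove (fun s => M i s * x s) j, hj, mul_zero, zero_add]
          calc signChanges (M.mulVec x) = signChanges (M'.mulVec x') := by rw [hmv]
            _ ≤ signChanges x' := IH m' (Nat.lt_succ_self m') M' hTNN' x'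
            _ ≤ signChanges x := signChanges_delete_zero x j hj
        · push_neg at hzero
          by_cases hsame : ∃ i : Fin m', 0 < x i.castSucc * x i.succ
          · -- Case B : merge two adjacent same-signed entries
            obtain ⟨i, hi⟩ := hsame
            have hm'pos : 0 < m' := i.pos
            set p : Fin (m' + 1) := i.castSucc with hp
            set q : Fin (m' + 1) := i.succ with hq
            set sa : Fin m' → Fin (m' + 1) := q.succAbove with hsa
            have hsai : sa i = p := by
              rw [hsa, hp, hq, Fin.succAbove_of_castSucc_lt]
              exact (Fin.castSucc_lt_succ : i.castSucc < i.succ)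
            have hp0 : x p ≠ 0 := hzero p
            set c0 : ℝ := x q / x p with hc0
            have hc0pos : 0 < c0 := by
              rw [hc0]
              have h1 : x q / x p = (x p * x q) / (x p * x p) := by
                field_simp
              rw [h1]
              exact div_pos hi (mul_self_pos.2 hp0)
            set M' : Matrix (Fin n) (Fin m') ℝ :=
              fun r t => M r (sa t) + (if t = i then c0 * M r q else 0) with hM'
            set x' : Fin m' → ℝ := x ∘ sa with hx'
            -- value formula for sa
            have hsaval : ∀ t : Fin m',
                (sa t : ℕ) = if (t : ℕ) < (q : ℕ) then (t : ℕ) else (t : ℕ) + 1 := by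
              intro t
              by_cases h : (t : ℕ) < (q : ℕ)
              · rw [if_pos h, hsa, Fin.succAbove_of_castSucc_lt]
                · rfl
                · rwa [Fin.lt_def]
              · rw [if_neg h, hsa, Fin.succAbove_of_le_castSucc]
                · rfl
                · rw [Fin.le_def]; push_neg at h; exact h
            have hTNN' : ∀ (r : ℕ) (f : Fin r → Fin n) (g : Fin r → Fin m'),
                StrictMono f → StrictMono g → 0 ≤ (M'.submatrix f g).det := by
              intro r f g hf hg
              by_cases hrange : ∃ t0, g t0 = i
              · obtain ⟨t0, ht0⟩ := hrange
                set N : Matrix (Fin r) (Fin r) ℝ := M.submatrix f (sa ∘ g) with hN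
                have hsplit : M'.submatrix f g =
                    N.updateCol t0 (fun rr => N rr t0 + c0 * M (f rr) q) := by
                  funext rr tt
                  by_cases htt : tt = t0
                  · subst htt
                    rw [Matrix.updateCol_self]
                    show M (f rr) (sa (g tt)) + (if g tt = i then c0 * M (f rr) q else 0)
                        = M.submatrix f (sa ∘ g) rr tt + c0 * M (f rr) q
                    rw [if_pos ht0, Matrix.submatrix_apply]
                    rfl
                  · rw [Matrix.updateCol_ne htt]
                    show M (f rr) (sa (g tt)) + (if g tt = i then c0 * M (f rr) q else 0)
                        = N rr tt
                    rw [if_neg (fun h => htt (hg.injective (h.trans ht0.symm) : tt = t0)), add_zero]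
                    rfl
                rw [hsplit]
                have hadd := Matrix.det_updateCol_add N t0
                  (fun rr => N rr t0) (fun rr => c0 * M (f rr) q)
                have : N.updateCol t0
                    (fun rr => N rr t0 + c0 * M (f rr) q)
                    = N.updateCol t0 ((fun rr => N rr t0) + (fun rr => c0 * M (f rr) q)) := rfl
                rw [this, hadd]
                have h1 : N.updateCol t0 (fun rr => N rr t0) = N := by
                  have : (fun rr => N rr t0) = fun rr => N rr t0 := rfl
                  exact Matrix.updateCol_eq_self N t0
                rw [h1]
                have h2 : (fun rr => c0 * M (f rr) q) = c0 • (fun rr => M (f rr) q) := rfl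
                rw [h2, Matrix.det_updateCol_smul]
                have hN2 : N.updateCol t0 (fun rr => M (f rr) q)
                    = M.submatrix f (Function.update (sa ∘ g) t0 q) := by
                  funext rr tt
                  by_cases htt : tt = t0
                  · subst htt
                    rw [Matrix.updateCol_self, Matrix.submatrix_apply,
                      Function.update_self]
                  · rw [Matrix.updateCol_ne htt, Matrix.submatrix_apply,
                      Function.update_of_ne htt]
                    rfl
                rw [hN2]
                have hg2 : StrictMono (Function.update (sa ∘ g) t0 q) := by
                  intro s t hst
                  have hmono : StrictMono (sa ∘ g) := (Fin.strictMono_succAbove q).comp hg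
                  by_cases hs : s = t0 <;> by_cases ht : t = t0
                  · subst hs; subst ht; exact absurd hst (lt_irrefl _)
                  · subst hs
                    rw [Function.update_self, Function.update_of_ne ht]
                    -- q < sa (g t), where g t > g t0 = i
                    have hgt : (i : ℕ) < (g t : ℕ) := by
                      have := hg hst
                      rw [ht0] at this
                      exact this
                    have hv := hsaval (g t)
                    have hqv : (q : ℕ) = (i : ℕ) + 1 := by rw [hq]; exact Fin.val_succ i
                    rw [if_neg (by omega)] at hv
                    simp only [Function.comp_apply]
                    rw [Fin.lt_def, hv]
                    omega
                  · subst ht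
                    rw [Function.update_self, Function.update_of_ne hs]
                    have hgt : (g s : ℕ) < (i : ℕ) := by
                      have := hg hst
                      rw [ht0] at this
                      exact this
                    have hv := hsaval (g s)
                    have hqv : (q : ℕ) = (i : ℕ) + 1 := by rw [hq]; exact Fin.val_succ i
                    rw [if_pos (by omega)] at hv
                    simp only [Function.comp_apply]
                    rw [Fin.lt_def, hv]
                    omega
                  · rw [Function.update_of_ne hs, Function.update_of_ne ht]
                    exact hmono hst
                have hbase := hTNN r f (sa ∘ g) hf ((Fin.strictMono_succAbove q).comp hg)
                have hupd := hTNN r f (Function.update (sa ∘ g) t0 q) hf hg2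
                rw [hN]
                nlinarith [hbase, hupd, hc0pos]
              · push_neg at hrange
                have : M'.submatrix f g = M.submatrix f (sa ∘ g) := by
                  funext rr tt
                  show M (f rr) (sa (g tt)) + _ = _
                  rw [if_neg (hrange tt), add_zero]
                  rfl
                rw [this]
                exact hTNN r f (sa ∘ g) hf ((Fin.strictMono_succAbove q).comp hg)
            have hmv : M'.mulVec x' = M.mulVec x := by
              funext r
              show ∑ t, (M r (sa t) + (if t = i then c0 * M r q else 0)) * x (sa t)
                  = ∑ s, M r s * x s
              have hsplit : ∀ t, (M r (sa t) + (if t = i then c0 * M r q else 0)) * x (sa t)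
                  = M r (sa t) * x (sa t) + (if t = i then c0 * M r q * x (sa t) else 0) := by
                intro t
                by_cases h : t = i <;> simp [h] <;> ring
              rw [Finset.sum_congr rfl (fun t _ => hsplit t), Finset.sum_add_distrib,
                Finset.sum_ite_eq' Finset.univ i (fun t => c0 * M r q * x (sa t))]
              simp only [Finset.mem_univ, if_true]
              rw [hsai]
              have hcancel : c0 * M r q * x p = M r q * x q := by
                rw [hc0]
                field_simp
              rw [hcancel, Fin.sum_univ_succAbove (fun s => M r s * x s) q]
              rw [← hsa]
              ring
            -- combinatorial part
            obtain ⟨k, hk⟩ : ∃ k, m' = k + 1 := ⟨m' - 1, by omega⟩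
            subst hk
            calc signChanges (M.mulVec x) = signChanges (M'.mulVec x') := by rw [hmv]
              _ ≤ signChanges x' := IH (k + 1) (Nat.lt_succ_self _) M' hTNN' x'
              _ ≤ signChanges x := by
                  rw [hx', hsa, hq]
                  exact signChanges_delete_same_sign x hzero i hi
          · -- Case C : x strictly alternates
            push_neg at hsame
            have halt_x : ∀ i : Fin m', x i.castSucc * x i.succ < 0 := by
              intro i
              rcases lt_or_eq_of_le (hsame i) with h | h
              · exact h
              · exfalso
                rcases mul_eq_zero.1 h with h' | h'
                · exact hzero _ h'
                · exact hzero _ h'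
            have hxlow : m' ≤ signChanges x := le_signChanges_of_adjacent x halt_x
            -- suffices to bound signChanges (M.mulVec x) by m'
            refine le_trans ?_ hxlow
            by_contra hcon
            push_neg at hcon
            obtain ⟨f, hfmono, hfalt⟩ := exists_alternating (M.mulVec x) hcon
            set C : Matrix (Fin (m' + 2)) (Fin (m' + 1)) ℝ := M.submatrix f id with hC
            have halt' : ∀ t : Fin (m' + 1),
                C.mulVec x t.castSucc * C.mulVec x t.succ < 0 := by
              intro t
              have h1 : C.mulVec x t.castSucc = M.mulVec x (f t.castSucc) := rfl
              have h2 : C.mulVec x t.succ = M.mulVec x (f t.succ) := rfl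
              rw [h1, h2]
              exact hfalt t
            have hminor : ∀ j : Fin (m' + 2), 0 ≤ (C.submatrix j.succAbove id).det := by
              intro j
              have hsub : C.submatrix j.succAbove id
                  = M.submatrix (f ∘ j.succAbove) id := by
                funext a b
                rfl
              rw [hsub]
              exact hTNN (m' + 1) (f ∘ j.succAbove) id
                (hfmono.comp (Fin.strictMono_succAbove j)) strictMono_id
            have hzm := minors_vanish C hminor x halt'
            obtain ⟨c, hcne, hCc⟩ := exists_kernel_of_minors_zero C hzm
            obtain ⟨j0, hj0⟩ : ∃ j0, c j0 ≠ 0 := Function.ne_iff.1 hcne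
            set t0 : ℝ := -(x j0) / c j0 with ht0
            set x1 : Fin (m' + 1) → ℝ := fun s => x s + t0 * c s with hx1
            have hx1j0 : x1 j0 = 0 := by
              rw [hx1]
              show x j0 + t0 * c j0 = 0
              rw [ht0]
              rw [div_mul_cancel₀ _ hj0]; ring
            have hCx1 : C.mulVec x1 = C.mulVec x := by
              funext t
              show ∑ s, C t s * (x s + t0 * c s) = _
              have hterm : ∀ s, C t s * (x s + t0 * c s)
                  = C t s * x s + t0 * (C t s * c s) := fun s => by ring
              rw [Finset.sum_congr rfl (fun s _ => hterm s), Finset.sum_add_distrib,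
                ← Finset.mul_sum]
              have h0 : ∑ s, C t s * c s = 0 := congrFun hCc t
              rw [h0, mul_zero, add_zero]
              rfl
            set C'' : Matrix (Fin (m' + 2)) (Fin m') ℝ := C.submatrix id j0.succAbove with hC''
            set x'' : Fin m' → ℝ := x1 ∘ j0.succAbove with hx''
            have hmv2 : C''.mulVec x'' = C.mulVec x1 := by
              funext t
              show ∑ s, C t (j0.succAbove s) * x1 (j0.succAbove s) = _
              have hh : (C.mulVec x1) t = ∑ s, C t s * x1 s := rfl
              rw [hh, Fin.sum_univ_succAbove (fun s => C t s * x1 s) j0, hx1j0,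
                mul_zero, zero_add]
            have hTNN'' : ∀ (r : ℕ) (f' : Fin r → Fin (m' + 2)) (g' : Fin r → Fin m'),
                StrictMono f' → StrictMono g' → 0 ≤ (C''.submatrix f' g').det := by
              intro r f' g' hf' hg'
              have hsub : C''.submatrix f' g'
                  = M.submatrix (f ∘ f') (j0.succAbove ∘ g') := by
                funext a b
                rfl
              rw [hsub]
              exact hTNN r (f ∘ f') (j0.succAbove ∘ g') (hfmono.comp hf')
                ((Fin.strictMono_succAbove j0).comp hg')
            have hbound := IH m' (Nat.lt_succ_self m') C'' hTNN'' x''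
            have hyalt : ∀ t : Fin (m' + 1),
                C''.mulVec x'' t.castSucc * C''.mulVec x'' t.succ < 0 := by
              intro t
              rw [hmv2, hCx1]
              exact halt' t
            have hlow := le_signChanges_of_adjacent (C''.mulVec x'') hyalt
            have hup : signChanges x'' ≤ m' - 1 := signChanges_le x''
            omega


/-- **Motzkin's theorem.** A totally non-negative real matrix (all minors
non-negative) is variation-decreasing: for every nonzero vector `x`,
`Var⁻(Mx) ≤ Var⁻(x)`. -/
theorem motzkin {n m : ℕ} (M : Matrix (Fin n) (Fin m) ℝ)
    (hTNN : ∀ (r : ℕ) (f : Fin r → Fin n) (g : Fin r → Fin m),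
      StrictMono f → StrictMono g → 0 ≤ (M.submatrix f g).det) :
    ∀ x : Fin m → ℝ, x ≠ 0 → signChanges (M.mulVec x) ≤ signChanges x := by
  intro x _
  exact motzkin_aux m M hTNN x
end

section
/- The Lah matrix LM_m is variation-decreasing: for every nonzero vector x ∈ ℝ^m, the number of sign changes of LM_m·x is at most the number of sign changes of x. -/
namespace VD

/-- first nonzero entry of a list (0 if none) -/
noncomputable def fn : List ℝ → ℝ
  | [] => 0
  | a :: l => if a = 0 then fn l else a

/-- number of sign changes of a list (ignoring zeros) -/
noncomputable def varL : List ℝ → ℕ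
  | [] => 0
  | a :: l => varL l + (if a * fn l < 0 then 1 else 0)

lemma fn_nil : fn [] = 0 := rfl

lemma fn_cons (a : ℝ) (l : List ℝ) : fn (a :: l) = if a = 0 then fn l else a := rfl

lemma fn_cons_zero (l : List ℝ) : fn (0 :: l) = fn l := by simp [fn_cons]

lemma fn_cons_ne (a : ℝ) (h : a ≠ 0) (l : List ℝ) : fn (a :: l) = a := by simp [fn_cons, h]

lemma varL_cons (a : ℝ) (l : List ℝ) :
    varL (a :: l) = varL l + (if a * fn l < 0 then 1 else 0) := rfl

lemma varL_cons_zero (l : List ℝ) : varL (0 :: l) = varL l := by simp [varL_cons]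

/-- if `0 < a*b` then multiplying by `a` or `b` gives same negativity -/
lemma sign_mul_iff {a b : ℝ} (hab : 0 < a * b) (c : ℝ) : a * c < 0 ↔ b * c < 0 := by
  rcases lt_trichotomy a 0 with ha | ha | ha
  · have hb : b < 0 := by nlinarith
    constructor <;> intro h <;> nlinarith
  · simp [ha] at hab
  · have hb : 0 < b := by nlinarith
    constructor <;> intro h <;> nlinarith

lemma triangle {a b c : ℝ} (hb : b ≠ 0) (h : a * c < 0) : a * b < 0 ∨ b * c < 0 := by
  by_cases hab : a * b < 0
  · exact Or.inl hab
  · right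
    have ha : a ≠ 0 := by rintro rfl; simp at h
    have : 0 < a * b := lt_of_le_of_ne (not_lt.1 hab) (Ne.symm (mul_ne_zero ha hb))
    exact (sign_mul_iff this c).1 h

lemma ite_sign_congr {a b c : ℝ} (hab : 0 < a * b) :
    (if a * c < 0 then (1:ℕ) else 0) = (if b * c < 0 then 1 else 0) :=
  if_congr (sign_mul_iff hab c) rfl rfl

lemma varL_head_sign {a b : ℝ} (hab : 0 < a * b) (l : List ℝ) :
    varL (a :: l) = varL (b :: l) := by
  rw [varL_cons, varL_cons, ite_sign_congr hab]

/-- monotonicity under sublists, strengthened with a head -/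
lemma varL_cons_sublist {l₁ l₂ : List ℝ} (h : List.Sublist l₁ l₂) :
    ∀ a : ℝ, varL (a :: l₁) ≤ varL (a :: l₂) := by
  induction h with
  | slnil => intro a; exact le_rfl
  | cons b h ih =>
      intro a
      rename_i l₁' l₂'
      by_cases hb : b = 0
      · subst hb
        calc varL (a :: l₁') ≤ varL (a :: l₂') := ih a
        _ = varL (a :: (0:ℝ) :: l₂') := by
              rw [varL_cons a l₂', varL_cons a ((0:ℝ) :: l₂'), varL_cons_zero, fn_cons_zero]
      · by_cases ha : a = 0
        · subst ha
          rw [varL_cons_zero, varL_cons_zero, varL_cons b l₂']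
          have h0 := ih 0
          rw [varL_cons_zero, varL_cons_zero] at h0
          omega
        · rcases lt_trichotomy (a * b) 0 with hab | hab | hab
          · calc varL (a :: l₁') = varL l₁' + (if a * fn l₁' < 0 then 1 else 0) := varL_cons _ _
            _ ≤ varL l₁' + ((if a * b < 0 then 1 else 0) + (if b * fn l₁' < 0 then 1 else 0)) := by
                  gcongr
                  split
                  · rename_i hneg
                    rcases triangle hb hneg with h1 | h1 <;> simp [h1]
                  · positivity
            _ = varL (b :: l₁') + (if a * b < 0 then 1 else 0) := by
                  rw [varL_cons b l₁']; ring
            _ ≤ varL (b :: l₂') + (if a * b < 0 then 1 else 0) := by gcongr; exact ih b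
            _ = varL (a :: b :: l₂') := by rw [varL_cons a (b :: l₂'), fn_cons_ne b hb]
          · exact absurd hab (mul_ne_zero ha hb)
          · calc varL (a :: l₁') = varL (b :: l₁') := varL_head_sign hab l₁'
            _ ≤ varL (b :: l₂') := ih b
            _ = varL (b :: b :: l₂') := by
                  rw [varL_cons b (b :: l₂'), fn_cons_ne b hb]
                  simp [not_lt.2 (mul_self_nonneg b)]
            _ = varL (a :: b :: l₂') :=
                  varL_head_sign (show (0:ℝ) < b * a by rw [mul_comm]; exact hab) _
  | cons_cons b h ih =>
      intro a
      rename_i l₁' l₂'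
      by_cases hb : b = 0
      · subst hb
        rw [varL_cons a ((0:ℝ) :: l₁'), varL_cons a ((0:ℝ) :: l₂'), fn_cons_zero, fn_cons_zero,
          varL_cons_zero, varL_cons_zero]
        have := ih a
        rw [varL_cons, varL_cons] at this
        omega
      · rw [varL_cons a (b :: l₁'), varL_cons a (b :: l₂'), fn_cons_ne b hb, fn_cons_ne b hb]
        exact Nat.add_le_add_right (ih b) _

lemma varL_sublist {l₁ l₂ : List ℝ} (h : List.Sublist l₁ l₂) : varL l₁ ≤ varL l₂ := by
  have := varL_cons_sublist h 0
  rwa [varL_cons_zero, varL_cons_zero] at this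


/-- bidiagonal contamination relation: `y_i = x_i + c_i * x_{i-1}` with `c_i ≥ 0`,
where `x_{-1} = prev`. -/
inductive R : ℝ → List ℝ → List ℝ → Prop
  | nil (prev : ℝ) : R prev [] []
  | cons (prev a c : ℝ) (l l' : List ℝ) (hc : 0 ≤ c) (h : R a l l') :
      R prev (a :: l) ((a + c * prev) :: l')

/-- key reduction: one bidiagonal step does not increase the number of sign changes -/
lemma varL_R {prev : ℝ} {x y : List ℝ} (hR : R prev x y) :
    ∀ s : ℝ, varL (s :: y) ≤ varL (s :: prev :: x) := by
  induction hR with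
  | nil prev =>
      intro s
      have h1 : varL [s] = 0 := by simp [varL_cons, varL, fn_nil]
      rw [h1]
      exact Nat.zero_le _
  | cons prev a c l l' hc h ih =>
      intro s
      set b := a + c * prev with hb_def
      by_cases hb : b = 0
      · rw [hb, varL_cons s ((0:ℝ) :: l'), fn_cons_zero, varL_cons_zero, ← varL_cons s l']
        calc varL (s :: l') ≤ varL (s :: a :: l) := ih s
        _ ≤ varL (s :: prev :: a :: l) := by
              apply varL_cons_sublist
              exact List.Sublist.cons _ (List.Sublist.refl _)
      · rw [varL_cons s (b :: l'), fn_cons_ne b hb]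
        by_cases hab : 0 < a * b
        · -- b has the sign of a
          have ha : a ≠ 0 := fun h0 => by rw [h0, zero_mul] at hab; exact lt_irrefl _ hab
          have e1 : varL (b :: a :: l) = varL (a :: a :: l) :=
            varL_head_sign (by rw [mul_comm]; exact hab) _
          have e2 : (if s * b < 0 then (1:ℕ) else 0) = (if s * a < 0 then 1 else 0) := by
            refine if_congr ?_ rfl rfl
            rw [mul_comm s b, mul_comm s a]
            exact sign_mul_iff (by rw [mul_comm]; exact hab) s
          have e3 : varL (a :: a :: l) = varL (a :: l) := by
            rw [varL_cons a (a :: l), fn_cons_ne a ha]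
            simp [not_lt.2 (mul_self_nonneg a)]
          calc varL (b :: l') + (if s * b < 0 then 1 else 0)
              ≤ varL (b :: a :: l) + (if s * b < 0 then 1 else 0) :=
                Nat.add_le_add_right (ih b) _
          _ = varL (a :: l) + (if s * a < 0 then 1 else 0) := by rw [e1, e3, e2]
          _ = varL (s :: a :: l) := by rw [varL_cons s (a :: l), fn_cons_ne a ha]
          _ ≤ varL (s :: prev :: a :: l) := by
                apply varL_cons_sublist
                exact List.Sublist.cons _ (List.Sublist.refl _)
        · -- otherwise prev carries the sign of b
          have hab' : a * b ≤ 0 := not_lt.1 hab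
          have hprev : 0 < prev * b := by
            rcases Ne.lt_or_gt hb with hb' | hb'
            · have ha2 : 0 ≤ a := by nlinarith
              have hcp : c * prev ≤ b := by nlinarith [hb_def]
              have : prev < 0 := by
                by_contra hp
                push_neg at hp
                nlinarith [mul_nonneg hc hp]
              nlinarith
            · have ha2 : a ≤ 0 := by nlinarith
              have : 0 < prev := by
                by_contra hp
                push_neg at hp
                nlinarith [mul_nonpos_of_nonneg_of_nonpos hc hp]
              nlinarith
          have hprev0 : prev ≠ 0 := fun h0 => by
            rw [h0, zero_mul] at hprev; exact lt_irrefl _ hprev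
          rw [varL_cons s (prev :: a :: l), fn_cons_ne prev hprev0]
          have e1 : varL (prev :: a :: l) = varL (b :: a :: l) :=
            varL_head_sign hprev _
          have e2 : (if s * b < 0 then (1:ℕ) else 0) = (if s * prev < 0 then 1 else 0) := by
            refine if_congr ?_ rfl rfl
            rw [mul_comm s b, mul_comm s prev]
            exact sign_mul_iff (by rw [mul_comm]; exact hprev) s
          rw [e2, e1]
          exact Nat.add_le_add_right (ih b) _

/-- characterization: if `l.get i` is the first nonzero entry then `fn l = l.get i` -/
lemma fn_eq_get : ∀ (l : List ℝ) (i : Fin l.length), l.get i ≠ 0 →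
    (∀ j : Fin l.length, j < i → l.get j = 0) → fn l = l.get i := by
  intro l
  induction l with
  | nil => exact fun i => i.elim0
  | cons a t ih =>
      intro i hne hz
      cases i using Fin.cases with
      | zero => exact fn_cons_ne a hne t
      | succ j =>
          have ha : a = 0 := hz ⟨0, Nat.succ_pos _⟩ (by simp [Fin.lt_def])
          rw [ha, fn_cons_zero]
          exact ih j hne (fun k hk => hz k.succ (by simpa using hk))

lemma fn_exists : ∀ (l : List ℝ), fn l ≠ 0 →
    ∃ i : Fin l.length, l.get i = fn l ∧ ∀ j : Fin l.length, j < i → l.get j = 0 := by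
  intro l
  induction l with
  | nil => intro h; exact absurd fn_nil h
  | cons a t ih =>
      intro h
      by_cases ha : a = 0
      · rw [ha, fn_cons_zero] at h ⊢
        obtain ⟨i, hi, hz⟩ := ih h
        refine ⟨i.succ, by simpa using hi, fun j hj => ?_⟩
        cases j using Fin.cases with
        | zero => simpa using ha
        | succ k => simpa using hz k (by simpa using hj)
      · rw [fn_cons_ne a ha]
        exact ⟨⟨0, Nat.succ_pos _⟩, rfl, fun j hj => absurd hj (by simp [Fin.lt_def])⟩

/-- vector version of `fn_eq_get` -/
lemma fnv_eq {n : ℕ} (v : Fin n → ℝ) (i : Fin n) (h : v i ≠ 0) (hz : ∀ j, j < i → v j = 0) :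
    fn (List.ofFn v) = v i := by
  have hlen : (List.ofFn v).length = n := List.length_ofFn
  have := fn_eq_get (List.ofFn v) (Fin.cast hlen.symm i) (by simpa using h)
    (fun j hj => by
      rw [List.get_ofFn]
      exact hz _ (by simpa [Fin.lt_def] using hj))
  rw [this, List.get_ofFn]
  congr 1

/-- vector version of `fn_exists` -/
lemma fnv_exists {n : ℕ} (v : Fin n → ℝ) (h : fn (List.ofFn v) ≠ 0) :
    ∃ i : Fin n, v i = fn (List.ofFn v) ∧ ∀ j, j < i → v j = 0 := by
  obtain ⟨i, hi, hz⟩ := fn_exists (List.ofFn v) h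
  have hlen : (List.ofFn v).length = n := List.length_ofFn
  refine ⟨Fin.cast hlen i, ?_, fun j hj => ?_⟩
  · rw [← hi, List.get_ofFn]
  · have := hz (Fin.cast hlen.symm j) (by simpa [Fin.lt_def] using hj)
    rw [List.get_ofFn] at this
    convert this using 2
    rfl

/-- the cons recursion for `signChanges` -/
lemma signChanges_cons {n : ℕ} (a : ℝ) (v : Fin n → ℝ) :
    signChanges (Fin.cons a v) = signChanges v + (if a * fn (List.ofFn v) < 0 then 1 else 0) := by
  classical
  set u : Fin (n+1) → ℝ := Fin.cons a v with hu
  set S : Set (Fin (n+1) × Fin (n+1)) :=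
    {p | p.1 < p.2 ∧ u p.1 * u p.2 < 0 ∧ ∀ k, p.1 < k → k < p.2 → u k = 0} with hS
  set T : Set (Fin n × Fin n) :=
    {p | p.1 < p.2 ∧ v p.1 * v p.2 < 0 ∧ ∀ k, p.1 < k → k < p.2 → v k = 0} with hT
  set e : Fin n × Fin n → Fin (n+1) × Fin (n+1) := fun p => (p.1.succ, p.2.succ) with he
  have hinj : Function.Injective e := by
    intro p q h
    simp only [he, Prod.mk.injEq] at h
    exact Prod.ext (Fin.succ_injective _ h.1) (Fin.succ_injective _ h.2)
  set Z : Set (Fin (n+1) × Fin (n+1)) := S ∩ {p | p.1 = 0} with hZ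
  have hSplit : S = e '' T ∪ Z := by
    ext p
    constructor
    · intro hp
      by_cases h0 : p.1 = 0
      · exact Or.inr ⟨hp, h0⟩
      · left
        obtain ⟨i, hi⟩ := Fin.eq_succ_of_ne_zero h0
        have h20 : p.2 ≠ 0 := by
          intro h2
          have := hp.1
          rw [h2] at this
          exact absurd this (Fin.not_lt_zero _)
        obtain ⟨j, hj⟩ := Fin.eq_succ_of_ne_zero h20
        refine ⟨(i, j), ⟨?_, ?_, ?_⟩, ?_⟩
        · have := hp.1; rw [hi, hj] at this; exact (Fin.succ_lt_succ_iff).1 this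
        · have := hp.2.1; rw [hi, hj] at this; simpa [hu] using this
        · intro k hik hkj
          have := hp.2.2 k.succ (by rw [hi]; exact Fin.succ_lt_succ_iff.2 hik)
            (by rw [hj]; exact Fin.succ_lt_succ_iff.2 hkj)
          simpa [hu] using this
        · simp only [he]
          rw [← hi, ← hj]
    · intro hp
      rcases hp with ⟨q, hq, hqe⟩ | hz
      · subst hqe
        refine ⟨Fin.succ_lt_succ_iff.2 hq.1, by simpa [hu, he] using hq.2.1, ?_⟩
        intro k h1k hk2
        have hk0 : k ≠ 0 := by
          intro h0
          rw [h0] at h1k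
          exact absurd h1k (Fin.not_lt_zero _)
        obtain ⟨k', hk'⟩ := Fin.eq_succ_of_ne_zero hk0
        rw [hk'] at h1k hk2 ⊢
        have := hq.2.2 k' (Fin.succ_lt_succ_iff.1 h1k) (Fin.succ_lt_succ_iff.1 hk2)
        simpa [hu] using this
      · exact hz.1
  have hdisj : Disjoint (e '' T) Z := by
    rw [Set.disjoint_left]
    rintro p ⟨q, _, hqe⟩ hz
    rw [← hqe] at hz
    exact Fin.succ_ne_zero q.1 hz.2
  have hZcard : Z.ncard = if a * fn (List.ofFn v) < 0 then 1 else 0 := by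
    split
    · rename_i hneg
      have hfn : fn (List.ofFn v) ≠ 0 := by
        intro h0; rw [h0, mul_zero] at hneg; exact lt_irrefl _ hneg
      obtain ⟨i₀, hi₀, hz₀⟩ := fnv_exists v hfn
      have : Z = {((0 : Fin (n+1)), i₀.succ)} := by
        ext p
        constructor
        · rintro ⟨hpS, hp1⟩
          have h20 : p.2 ≠ 0 := by
            intro h2
            have := hpS.1; rw [h2] at this
            exact absurd this (Fin.not_lt_zero _)
          obtain ⟨q, hq⟩ := Fin.eq_succ_of_ne_zero h20
          have hprod : a * v q < 0 := by
            have := hpS.2.1; rw [hp1, hq] at this; simpa [hu] using this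
          have hzq : ∀ k, k < q → v k = 0 := by
            intro k hk
            have := hpS.2.2 k.succ (by rw [hp1]; exact Fin.succ_pos k)
              (by rw [hq]; exact Fin.succ_lt_succ_iff.2 hk)
            simpa [hu] using this
          have hvq : v q ≠ 0 := by
            intro h0; rw [h0, mul_zero] at hprod; exact lt_irrefl _ hprod
          have hqi : q = i₀ := by
            rcases lt_trichotomy q i₀ with h | h | h
            · exact absurd (hz₀ q h) hvq
            · exact h
            · exact absurd (hzq i₀ h) (by rw [hi₀]; exact hfn)
          have : p = (p.1, p.2) := rfl
          rw [Set.mem_singleton_iff, this, hp1, hq, hqi]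
        · intro hp
          rw [Set.mem_singleton_iff] at hp
          subst hp
          refine ⟨⟨Fin.succ_pos i₀, ?_, ?_⟩, rfl⟩
          · show u 0 * u i₀.succ < 0
            simpa [hu, hi₀] using hneg
          · intro k h0k hk2
            have hk0 : k ≠ 0 := by
              intro h0; rw [h0] at h0k; exact absurd h0k (Fin.not_lt_zero _)
            obtain ⟨k', hk'⟩ := Fin.eq_succ_of_ne_zero hk0
            rw [hk'] at hk2 ⊢
            have := hz₀ k' (Fin.succ_lt_succ_iff.1 hk2)
            simpa [hu] using this
      rw [this, Set.ncard_singleton]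
    · rename_i hneg
      have : Z = ∅ := by
        ext p
        simp only [Set.mem_empty_iff_false, iff_false]
        rintro ⟨hpS, hp1⟩
        have h20 : p.2 ≠ 0 := by
          intro h2
          have := hpS.1; rw [h2] at this
          exact absurd this (Fin.not_lt_zero _)
        obtain ⟨q, hq⟩ := Fin.eq_succ_of_ne_zero h20
        have hprod : a * v q < 0 := by
          have := hpS.2.1; rw [hp1, hq] at this; simpa [hu] using this
        have hzq : ∀ k, k < q → v k = 0 := by
          intro k hk
          have := hpS.2.2 k.succ (by rw [hp1]; exact Fin.succ_pos k)
            (by rw [hq]; exact Fin.succ_lt_succ_iff.2 hk)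
          simpa [hu] using this
        have hvq : v q ≠ 0 := by
          intro h0; rw [h0, mul_zero] at hprod; exact lt_irrefl _ hprod
        rw [fnv_eq v q hvq hzq] at hneg
        exact hneg hprod
      rw [this, Set.ncard_empty]
  have : signChanges u = S.ncard := rfl
  rw [this, hSplit, Set.ncard_union_eq hdisj (Set.toFinite _) (Set.toFinite _),
    Set.ncard_image_of_injective T hinj, hZcard]
  rfl

/-- `signChanges` equals the list count of sign changes -/
lemma signChanges_eq_varL {n : ℕ} (u : Fin n → ℝ) : signChanges u = varL (List.ofFn u) := by
  induction n with
  | zero =>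
      have h1 : {p : Fin 0 × Fin 0 |
          p.1 < p.2 ∧ u p.1 * u p.2 < 0 ∧ ∀ k, p.1 < k → k < p.2 → u k = 0} = ∅ :=
        Set.eq_empty_of_forall_notMem (fun p _ => p.1.elim0)
      rw [signChanges, h1, Set.ncard_empty, List.ofFn_zero]
      rfl
  | succ n ih =>
      have h := signChanges_cons (u 0) (Fin.tail u)
      rw [Fin.cons_self_tail u] at h
      rw [h, ih (Fin.tail u), List.ofFn_succ, varL_cons]
      rfl

/-- one bidiagonal step on vectors -/
noncomputable def stepV {m : ℕ} (c : ℕ → ℝ) (x : Fin m → ℝ) : Fin m → ℝ :=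
  fun i => if _h : (i : ℕ) = 0 then x i
    else x i + c i * x ⟨(i : ℕ) - 1, lt_of_le_of_lt (Nat.sub_le _ _) i.isLt⟩

/-- build the relation `R` for function-defined vectors -/
lemma R_ofFn : ∀ {m : ℕ} (prev : ℝ) (x y : Fin m → ℝ),
    (∀ i : Fin m, ∃ c, 0 ≤ c ∧ y i = x i + c *
      (if h : (i : ℕ) = 0 then prev
       else x ⟨(i : ℕ) - 1, lt_of_le_of_lt (Nat.sub_le _ _) i.isLt⟩)) →
    R prev (List.ofFn x) (List.ofFn y) := by
  intro m
  induction m with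
  | zero =>
      intro prev x y _
      rw [List.ofFn_zero, List.ofFn_zero]
      exact R.nil prev
  | succ n ih =>
      intro prev x y hxy
      rw [List.ofFn_succ, List.ofFn_succ]
      obtain ⟨c0, hc0, h0⟩ := hxy 0
      have h0' : y 0 = x 0 + c0 * prev := by simpa using h0
      rw [h0']
      refine R.cons prev (x 0) c0 _ _ hc0 ?_
      apply ih (x 0) (fun i => x i.succ) (fun i => y i.succ)
      intro i
      obtain ⟨c, hc, hstep⟩ := hxy i.succ
      refine ⟨c, hc, ?_⟩
      rw [hstep]
      congr 1
      congr 1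
      have his : ((i.succ : Fin (n+1)) : ℕ) = (i : ℕ) + 1 := rfl
      rw [dif_neg (by omega : ¬((i.succ : Fin (n+1)) : ℕ) = 0)]
      by_cases hi0 : (i : ℕ) = 0
      · rw [dif_pos hi0]
        congr 1
        ext
        simp [his, hi0]
      · rw [dif_neg hi0]
        show x _ = x _
        congr 1
        ext
        simp only [his, Fin.val_succ]
        omega

/-- one bidiagonal step does not increase `signChanges` -/
lemma signChanges_stepV {m : ℕ} (c : ℕ → ℝ) (hc : ∀ i, 0 ≤ c i) (x : Fin m → ℝ) :
    signChanges (stepV c x) ≤ signChanges x := by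
  have hR : R 0 (List.ofFn x) (List.ofFn (stepV c x)) := by
    apply R_ofFn
    intro i
    by_cases hi : (i : ℕ) = 0
    · exact ⟨0, le_refl _, by rw [dif_pos hi]; simp [stepV, hi]⟩
    · exact ⟨c i, hc i, by rw [dif_neg hi]; simp [stepV, hi]⟩
  have h := varL_R hR 0
  rw [varL_cons_zero, varL_cons_zero, varL_cons_zero] at h
  rw [signChanges_eq_varL, signChanges_eq_varL]
  exact h

lemma mul_neg_iff_left {c t : ℝ} (hc : 0 < c) : c * t < 0 ↔ t < 0 := by
  constructor <;> intro h <;> nlinarith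

/-- multiplying by a positive diagonal does not change `signChanges` -/
lemma signChanges_diag {m : ℕ} (d x : Fin m → ℝ) (hd : ∀ i, 0 < d i) :
    signChanges (fun i => d i * x i) = signChanges x := by
  unfold signChanges
  congr 1
  ext p
  simp only [Set.mem_setOf_eq]
  have hprod : d p.1 * x p.1 * (d p.2 * x p.2) = (d p.1 * d p.2) * (x p.1 * x p.2) := by ring
  rw [hprod, mul_neg_iff_left (mul_pos (hd p.1) (hd p.2))]
  constructor
  · rintro ⟨h1, h2, h3⟩
    exact ⟨h1, h2, fun k hk1 hk2 => by
      have := h3 k hk1 hk2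
      rcases mul_eq_zero.1 this with h | h
      · exact absurd h (hd k).ne'
      · exact h⟩
  · rintro ⟨h1, h2, h3⟩
    exact ⟨h1, h2, fun k hk1 hk2 => by rw [h3 k hk1 hk2, mul_zero]⟩

/-- iterated bidiagonal steps producing (scaled) Pascal action -/
noncomputable def iterV (m : ℕ) (x : Fin m → ℝ) : ℕ → Fin m → ℝ
  | 0 => fun j => x j / (Nat.factorial ((j : ℕ) + 1))
  | t + 1 => stepV (fun i => if t + 1 ≤ i then 1 else 0) (iterV m x t)

lemma signChanges_iterV (m : ℕ) (x : Fin m → ℝ) (t : ℕ) :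
    signChanges (iterV m x t) ≤ signChanges x := by
  induction t with
  | zero =>
      have : iterV m x 0 = fun j : Fin m => (1 / (Nat.factorial ((j : ℕ) + 1) : ℝ)) * x j := by
        funext j
        rw [iterV]
        ring
      rw [this, signChanges_diag _ x (fun j => by positivity)]
  | succ t ih =>
      refine le_trans ?_ ih
      rw [iterV]
      apply signChanges_stepV
      intro i
      split <;> norm_num

/-- closed form of the iteration -/
lemma iterV_eq (m : ℕ) (x : Fin m → ℝ) (t : ℕ) :
    iterV m x t = fun i : Fin m => ∑ j : Fin m,
      (if (j : ℕ) ≤ (i : ℕ) then ((Nat.choose (min t (i : ℕ)) ((i : ℕ) - (j : ℕ)) : ℕ) : ℝ) else 0)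
        * (x j / (Nat.factorial ((j : ℕ) + 1))) := by
  induction t with
  | zero =>
      funext i
      rw [iterV]
      rw [Finset.sum_eq_single i]
      · simp
      · intro j _ hji
        by_cases hle : (j : ℕ) ≤ (i : ℕ)
        · have : (i : ℕ) - (j : ℕ) ≠ 0 := by
            have : (j : ℕ) ≠ (i : ℕ) := fun h => hji (Fin.ext h)
            omega
          simp [hle, Nat.choose_eq_zero_of_lt (by omega : 0 < (i : ℕ) - (j : ℕ))]
        · simp [hle]
      · intro h
        exact absurd (Finset.mem_univ i) h
  | succ t ih =>
      funext i
      rw [iterV, stepV]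
      by_cases hi0 : (i : ℕ) = 0
      · rw [dif_pos hi0, ih]
        apply Finset.sum_congr rfl
        intro j _
        have hm : min t (i : ℕ) = min (t+1) (i : ℕ) := by omega
        rw [hm]
      · rw [dif_neg hi0]
        by_cases hti : t + 1 ≤ (i : ℕ)
        · rw [if_pos hti, ih, one_mul]
          rw [← Finset.sum_add_distrib]
          apply Finset.sum_congr rfl
          intro j _
          set p : Fin m := ⟨(i : ℕ) - 1, lt_of_le_of_lt (Nat.sub_le _ _) i.isLt⟩ with hp
          have hpv : (p : ℕ) = (i : ℕ) - 1 := rfl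
          rw [← add_mul]
          congr 1
          by_cases hji : (j : ℕ) ≤ (i : ℕ) - 1
          · rw [if_pos (by omega), if_pos (by rw [hpv]; exact hji), if_pos (by omega)]
            have h1 : min t (i : ℕ) = t := by omega
            have h2 : min t (p : ℕ) = t := by rw [hpv]; omega
            have h3 : min (t+1) (i : ℕ) = t + 1 := by omega
            rw [h1, h2, h3, hpv]
            have h4 : (i : ℕ) - (j : ℕ) = ((i : ℕ) - 1 - (j : ℕ)) + 1 := by omega
            rw [h4, Nat.choose_succ_succ]
            push_cast
            ring
          · by_cases hji2 : (j : ℕ) ≤ (i : ℕ)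
            · have hj : (j : ℕ) = (i : ℕ) := by omega
              rw [if_pos hji2, if_neg (by rw [hpv]; omega), if_pos hji2]
              have h4 : (i : ℕ) - (j : ℕ) = 0 := by omega
              rw [h4]
              simp
            · rw [if_neg hji2, if_neg (by rw [hpv]; omega), if_neg hji2]
              simp
        · rw [if_neg hti, ih, zero_mul, add_zero]
          apply Finset.sum_congr rfl
          intro j _
          have hm : min t (i : ℕ) = min (t+1) (i : ℕ) := by omega
          rw [hm]

/-- the Lah matrix action as iterated steps -/
lemma lah_mulVec (m : ℕ) (x : Fin m → ℝ) :
    (lahMatrix m).mulVec x = fun i : Fin m =>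
      ((Nat.factorial ((i : ℕ) + 1) : ℕ) : ℝ) * iterV m x (m - 1) i := by
  funext i
  rw [iterV_eq]
  rw [Matrix.mulVec, dotProduct, Finset.mul_sum]
  apply Finset.sum_congr rfl
  intro j _
  have hmin : min (m - 1) (i : ℕ) = (i : ℕ) := by
    have := i.isLt; omega
  rw [hmin]
  by_cases hji : (j : ℕ) ≤ (i : ℕ)
  · rw [if_pos hji]
    have hlah : lah ((i : ℕ) + 1) ((j : ℕ) + 1) =
        Nat.choose (i : ℕ) (j : ℕ) * (Nat.factorial ((i : ℕ) + 1) / Nat.factorial ((j : ℕ) + 1)) := by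
      rw [lah]
      rw [if_neg (by omega), if_pos (by omega)]
      simp
    have hdvd : Nat.factorial ((j : ℕ) + 1) ∣ Nat.factorial ((i : ℕ) + 1) :=
      Nat.factorial_dvd_factorial (by omega)
    have hfj : ((Nat.factorial ((j : ℕ) + 1) : ℕ) : ℝ) ≠ 0 := by
      exact_mod_cast (Nat.factorial_ne_zero _)
    have hchoose : Nat.choose (i : ℕ) ((i : ℕ) - (j : ℕ)) = Nat.choose (i : ℕ) (j : ℕ) :=
      Nat.choose_symm hji
    rw [lahMatrix]
    show ((lah ((i : ℕ) + 1) ((j : ℕ) + 1) : ℕ) : ℝ) * x j = _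
    rw [hlah, hchoose]
    push_cast [Nat.cast_div hdvd hfj]
    field_simp
  · rw [if_neg hji]
    have hlah : lah ((i : ℕ) + 1) ((j : ℕ) + 1) = 0 := by
      rw [lah, if_neg (by omega), if_neg (by omega)]
    rw [lahMatrix]
    show ((lah ((i : ℕ) + 1) ((j : ℕ) + 1) : ℕ) : ℝ) * x j = _ * (0 * (x j / _))
    rw [hlah]
    simp

end VD



/-- The Lah matrix is variation-decreasing: for every nonzero `x ∈ ℝ^m`,
`Var⁻(LM_m · x) ≤ Var⁻(x)`. -/
theorem lahMatrix_variation_decreasing (m : ℕ) :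
    ∀ x : Fin m → ℝ, x ≠ 0 →
      signChanges ((lahMatrix m).mulVec x) ≤ signChanges x := by
  intro x _
  rw [VD.lah_mulVec m x]
  calc signChanges (fun i : Fin m => ((Nat.factorial ((i : ℕ) + 1) : ℕ) : ℝ) * VD.iterV m x (m-1) i)
      = signChanges (VD.iterV m x (m - 1)) :=
        VD.signChanges_diag _ _ (fun i => by positivity)
  _ ≤ signChanges x := VD.signChanges_iterV m x (m - 1)
end
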